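/- arXiv:2102.10846 — 11 statements merged into one kernel-verified Lean document; each statement's English description precedes it below -/
import Mathlib

section
/- Let m be a positive integer and let D : ℝ^m → ℝ. Let Δ and S be convex subsets of ℝ^m, let α > 0, and suppose D is α-strongly concave on S. Suppose θ⋆ ∈ Δ ∩ S satisfies D(θ') ≤ D(θ⋆) for every θ' ∈ Δ. Then for every θ ∈ Δ ∩ S and every real number P with D(θ⋆) ≤ P, one has ‖θ − θ⋆‖ ≤ √(2(P − D(θ))/α) (equivalently, ‖θ − θ⋆‖² ≤ 2(P − D(θ))/α). -/
/-- **Gap Safe sphere from local strong concavity** (Theorem 3 of the paper).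
If `D` is `α`-strongly concave on a convex set `S` containing the dual optimum `θs`
(a maximizer of `D` over the convex feasible set `Δ`), then for every
`θ ∈ Δ ∩ S` and every `P ≥ D θs` (weak duality), the dual optimum lies in the ball
of center `θ` and radius `√(2 (P - D θ) / α)`. -/
theorem stmt_0 {m : ℕ} (hm : 0 < m) (D : EuclideanSpace ℝ (Fin m) → ℝ)
    (Δ S : Set (EuclideanSpace ℝ (Fin m))) (hΔ : Convex ℝ Δ) (hS : Convex ℝ S)
    (α : ℝ) (hα : 0 < α)
    (hconc : ∀ θ₁ ∈ S, ∀ θ₂ ∈ S, ∀ t : ℝ, 0 ≤ t → t ≤ 1 →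
      t * D θ₁ + (1 - t) * D θ₂ + α / 2 * t * (1 - t) * ‖θ₁ - θ₂‖ ^ 2
        ≤ D (t • θ₁ + (1 - t) • θ₂))
    (θs : EuclideanSpace ℝ (Fin m)) (hθs : θs ∈ Δ ∩ S)
    (hmax : ∀ θ' ∈ Δ, D θ' ≤ D θs) :
    ∀ θ ∈ Δ ∩ S, ∀ P : ℝ, D θs ≤ P →
      ‖θ - θs‖ ≤ Real.sqrt (2 * (P - D θ) / α) := by
  rintro θ ⟨hθΔ, hθS⟩ P hP
  set r := ‖θ - θs‖ with hr
  set g := D θs - D θ with hg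
  have hg0 : 0 ≤ g := sub_nonneg.2 (hmax θ hθΔ)
  -- key: for all t ∈ (0,1], (1-t) * (α/2 * r^2) ≤ g
  have key : ∀ t : ℝ, 0 < t → t ≤ 1 → (1 - t) * (α / 2 * r ^ 2) ≤ g := by
    intro t ht0 ht1
    have hmem : t • θ + (1 - t) • θs ∈ Δ :=
      hΔ hθΔ hθs.1 ht0.le (by linarith) (by ring)
    have h1 := hconc θ hθS θs hθs.2 t ht0.le ht1
    have h2 := hmax _ hmem
    -- t * D θ + (1-t) * D θs + α/2 * t * (1-t) * r^2 ≤ D θs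
    have h3 : t * D θ + (1 - t) * D θs + α / 2 * t * (1 - t) * r ^ 2 ≤ D θs :=
      le_trans h1 h2
    nlinarith [h3, ht0]
  -- conclude α/2 * r^2 ≤ g
  have hc : α / 2 * r ^ 2 ≤ g := by
    by_contra h
    push_neg at h
    set c := α / 2 * r ^ 2 with hcdef
    have hcg : g < c := h
    have hcpos : 0 < c := lt_of_le_of_lt hg0 hcg
    have ht0 : 0 < (c - g) / (2 * c) := div_pos (by linarith) (by linarith)
    have ht1 : (c - g) / (2 * c) ≤ 1 := by
      rw [div_le_one (by linarith)]; linarith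
    have := key _ ht0 ht1
    have hne : (2 : ℝ) * c ≠ 0 := ne_of_gt (by linarith)
    rw [show (1 - (c - g) / (2 * c)) * c = c - (c - g) / 2 by field_simp] at this
    linarith
  -- r^2 ≤ 2 (P - D θ) / α
  have hsq : r ^ 2 ≤ 2 * (P - D θ) / α := by
    rw [le_div_iff₀ hα]
    nlinarith [hc, hP]
  have := Real.sqrt_le_sqrt hsq
  rwa [Real.sqrt_sq (norm_nonneg _)] at this
end

section
/- Let F : ℝ^m → ℝ be convex and differentiable at 0 with gradient g = ∇F(0), let A be a real m×n matrix, and let λ > 0. Then the zero vector minimizes x ↦ F(Ax) + λ Σ_{j=1}^n |x_j| over the nonnegative orthant {x ∈ ℝ^n : x_j ≥ 0 for all j} if and only if λ ≥ −(Aᵀg)_j for every j ∈ {1,…,n}, i.e., if and only if λ ≥ max_j [−(Aᵀ∇F(0))]_j. -/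
open Matrix Filter in
private lemma tendsto_slope_right' (φ : ℝ → ℝ) (d : ℝ) (hd : HasDerivAt φ d 0) :
    Tendsto (fun t => (φ t - φ 0) / t) (nhdsWithin (0:ℝ) (Set.Ioi 0)) (nhds d) := by
  have h := hasDerivAt_iff_tendsto_slope.mp hd
  have h2 := h.mono_left (nhdsWithin_mono _ (fun t (ht : t ∈ Set.Ioi (0:ℝ)) => ne_of_gt ht))
  exact h2.congr (fun t => by rw [slope_def_field]; ring_nf)

open Matrix in
private lemma grad_line {m : ℕ} (F : EuclideanSpace ℝ (Fin m) → ℝ)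
    (g : EuclideanSpace ℝ (Fin m)) (hg : HasGradientAt F g 0)
    (v : EuclideanSpace ℝ (Fin m)) :
    HasDerivAt (fun t : ℝ => F (t • v)) (inner ℝ g v : ℝ) 0 := by
  have hf := hasGradientAt_iff_hasFDerivAt.mp hg
  have hc : HasDerivAt (fun t : ℝ => t • v) v 0 := by
    simpa using (hasDerivAt_id (0:ℝ)).smul_const v
  have h0 : (0:ℝ) • v = 0 := zero_smul ℝ v
  have := HasFDerivAt.comp_hasDerivAt 0 (h0 ▸ hf) hc
  simpa [Function.comp_def, InnerProductSpace.toDual_apply_apply] using this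

private lemma convex_line {m : ℕ} (F : EuclideanSpace ℝ (Fin m) → ℝ)
    (hF : ConvexOn ℝ Set.univ F) (v : EuclideanSpace ℝ (Fin m)) :
    ConvexOn ℝ Set.univ (fun t : ℝ => F (t • v)) := by
  have := hF.comp_affineMap (LinearMap.toSpanSingleton ℝ (EuclideanSpace ℝ (Fin m)) v).toAffineMap
  simpa [Function.comp_def, LinearMap.toSpanSingleton_apply] using this

/-- subgradient inequality in 1D -/
private lemma deriv_le_slope (φ : ℝ → ℝ) (hφ : ConvexOn ℝ Set.univ φ) (d : ℝ)
    (hd : HasDerivAt φ d 0) : d ≤ φ 1 - φ 0 := by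
  refine le_of_tendsto (tendsto_slope_right' φ d hd) ?_
  filter_upwards [Ioo_mem_nhdsGT_of_mem (Set.left_mem_Ico.2 one_pos)] with t ht
  have := hφ.secant_mono (Set.mem_univ (0:ℝ)) (Set.mem_univ t) (Set.mem_univ 1)
    (ne_of_gt ht.1) one_ne_zero (le_of_lt ht.2)
  simpa using this

private lemma le_deriv_of_slope (φ : ℝ → ℝ) (d lam : ℝ) (hd : HasDerivAt φ d 0)
    (h : ∀ t : ℝ, 0 < t → φ 0 ≤ φ t + lam * t) : -lam ≤ d := by
  refine ge_of_tendsto (tendsto_slope_right' φ d hd) ?_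
  filter_upwards [self_mem_nhdsWithin] with t (ht : t ∈ Set.Ioi (0:ℝ))
  rw [le_div_iff₀ ht]
  have := h t ht
  linarith

open Matrix in
/-- **Maximum regularization parameter for the nonnegative ℓ1-regularized problem**
(Proposition 4 of the paper, case `C = ℝ₊ⁿ`). The zero vector minimizes
`x ↦ F (A x) + λ ‖x‖₁` over the nonnegative orthant iff `λ ≥ -(Aᵀ ∇F(0))_j` for all `j`. -/
theorem stmt_2 {m n : ℕ} (F : EuclideanSpace ℝ (Fin m) → ℝ)
    (hF : ConvexOn ℝ Set.univ F)
    (g : EuclideanSpace ℝ (Fin m)) (hg : HasGradientAt F g 0)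
    (A : Matrix (Fin m) (Fin n) ℝ) (lam : ℝ) (hlam : 0 < lam) :
    (∀ x : Fin n → ℝ, (∀ j, 0 ≤ x j) →
        F (WithLp.toLp 2 (A.mulVec (0 : Fin n → ℝ))) + lam * ∑ j, |(0 : Fin n → ℝ) j|
          ≤ F (WithLp.toLp 2 (A.mulVec x)) + lam * ∑ j, |x j|)
      ↔ ∀ j, -(Aᵀ.mulVec g j) ≤ lam := by
  have hA0 : A.mulVec (0 : Fin n → ℝ) = 0 := Matrix.mulVec_zero A
  have hinner : ∀ x : Fin n → ℝ,
      (inner ℝ g (WithLp.toLp 2 (A.mulVec x)) : ℝ)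
        = ∑ j, Aᵀ.mulVec g j * x j := by
    intro x
    simp only [PiLp.inner_apply, RCLike.inner_apply, starRingEnd_apply, star_trivial,
      PiLp.toLp_apply, Matrix.mulVec, dotProduct, Matrix.transpose_apply, Finset.mul_sum,
      Finset.sum_mul]
    rw [Finset.sum_comm]
    exact Finset.sum_congr rfl fun j _ => Finset.sum_congr rfl fun i _ => by ring
  constructor
  · intro h j
    set v : EuclideanSpace ℝ (Fin m) := WithLp.toLp 2 (A.mulVec (Pi.single j 1)) with hv
    have hderiv := grad_line F g hg v
    have hd : (inner ℝ g v : ℝ) = Aᵀ.mulVec g j := by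
      rw [hv, hinner]
      simp [Pi.single_apply, mul_comm]
    rw [neg_le]
    rw [hd] at hderiv
    refine le_deriv_of_slope _ _ lam hderiv ?_
    intro t ht
    have := h (t • (Pi.single j 1 : Fin n → ℝ)) (fun k => by
      simp [Pi.single_apply]
      positivity)
    have hmv : WithLp.toLp 2 (A.mulVec (t • (Pi.single j 1 : Fin n → ℝ))) = t • v := by
      rw [hv]; rw [Matrix.mulVec_smul, WithLp.toLp_smul]
    have hsum : ∑ k, |(t • (Pi.single j 1 : Fin n → ℝ)) k| = t := by
      simp [Pi.single_apply, abs_of_nonneg ht.le, apply_ite]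
    rw [hA0, hmv, hsum] at this
    simpa [zero_smul] using this
  · intro h x hx
    set w : EuclideanSpace ℝ (Fin m) := WithLp.toLp 2 (A.mulVec x) with hw
    have hderiv := grad_line F g hg w
    have hconv := convex_line F hF w
    have key := deriv_le_slope _ hconv _ hderiv
    simp only [one_smul, zero_smul] at key
    have hdval : (inner ℝ g w : ℝ) = ∑ j, Aᵀ.mulVec g j * x j := hinner x
    have hlow : -lam * ∑ j, |x j| ≤ (inner ℝ g w : ℝ) := by
      rw [hdval, Finset.mul_sum]
      refine Finset.sum_le_sum fun j _ => ?_
      have h1 : -lam ≤ Aᵀ.mulVec g j := neg_le.mpr (h j)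
      have h2 := hx j
      rw [abs_of_nonneg h2]
      exact mul_le_mul_of_nonneg_right h1 h2
    rw [hA0]
    have : F 0 ≤ F w + lam * ∑ j, |x j| := by nlinarith
    simpa [hw] using this
end

section
/- Let y ≥ 0, ε > 0 and u ∈ ℝ. Define f(z) = (4/3)(y^{3/2} + (1/2)(z+ε)^{3/2} − (3/2) y (z+ε)^{1/2}) for z ≥ −ε. Then the value u³/6 + (u² + 4y)^{3/2}/6 + u·y − (4/3)y^{3/2} − ε·u is the greatest element of the set {z·u − f(z) : z ∈ ℝ, z ≥ −ε}; in particular the supremum is attained (at z = ((u + √(u²+4y))/2)² − ε) and equals this value. -/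
lemma rpow32 (x : ℝ) (hx : 0 ≤ x) : x ^ ((3 : ℝ) / 2) = Real.sqrt x ^ 3 := by
  rw [Real.sqrt_eq_rpow, ← Real.rpow_natCast (x ^ ((1:ℝ)/2)) 3, ← Real.rpow_mul hx]
  norm_num

/-- **Fenchel conjugate of the ε-smoothed β-divergence data term with β = 1.5**:
`sup_{z ≥ -ε} (z u - f z) = u³/6 + (u² + 4y)^{3/2}/6 + u y - (4/3) y^{3/2} - ε u`,
attained at `z = ((u + √(u² + 4y))/2)² - ε`. -/
theorem stmt_4 (y ε u : ℝ) (hy : 0 ≤ y) (hε : 0 < ε)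
    (f : ℝ → ℝ)
    (hf : ∀ z : ℝ, f z = (4 / 3) * (y ^ ((3 : ℝ) / 2)
        + (1 / 2) * (z + ε) ^ ((3 : ℝ) / 2) - (3 / 2) * y * Real.sqrt (z + ε))) :
    IsGreatest {v : ℝ | ∃ z : ℝ, -ε ≤ z ∧ v = z * u - f z}
      (u ^ 3 / 6 + (u ^ 2 + 4 * y) ^ ((3 : ℝ) / 2) / 6 + u * y
        - (4 / 3) * y ^ ((3 : ℝ) / 2) - ε * u)
    ∧ u ^ 3 / 6 + (u ^ 2 + 4 * y) ^ ((3 : ℝ) / 2) / 6 + u * y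
        - (4 / 3) * y ^ ((3 : ℝ) / 2) - ε * u
      = (((u + Real.sqrt (u ^ 2 + 4 * y)) / 2) ^ 2 - ε) * u
        - f (((u + Real.sqrt (u ^ 2 + 4 * y)) / 2) ^ 2 - ε) := by
  set s := Real.sqrt (u ^ 2 + 4 * y) with hs_def
  have hsy : 0 ≤ u ^ 2 + 4 * y := by positivity
  have hs0 : 0 ≤ s := Real.sqrt_nonneg _
  have hs2 : s ^ 2 = u ^ 2 + 4 * y := Real.sq_sqrt hsy
  have hus : u ≤ s := by nlinarith [sq_nonneg (s - u), sq_nonneg (s + u)]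
  have hw0 : 0 ≤ (u + s) / 2 := by nlinarith [sq_nonneg (s + u)]
  have hy3 : y ^ ((3 : ℝ) / 2) = Real.sqrt y ^ 3 := rpow32 y hy
  have hs3 : (u ^ 2 + 4 * y) ^ ((3 : ℝ) / 2) = s ^ 3 := rpow32 _ hsy
  -- the attained-value equality
  have heq : u ^ 3 / 6 + (u ^ 2 + 4 * y) ^ ((3 : ℝ) / 2) / 6 + u * y
        - (4 / 3) * y ^ ((3 : ℝ) / 2) - ε * u
      = (((u + s) / 2) ^ 2 - ε) * u
        - f (((u + s) / 2) ^ 2 - ε) := by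
    rw [hf]
    have h1 : ((u + s) / 2) ^ 2 - ε + ε = ((u + s) / 2) ^ 2 := by ring
    rw [h1, Real.sqrt_sq hw0, rpow32 _ (sq_nonneg _), Real.sqrt_sq hw0, hy3, hs3]
    linear_combination (s / 4) * hs2
  refine ⟨⟨⟨((u + s) / 2) ^ 2 - ε, by nlinarith [sq_nonneg ((u + s) / 2)], heq⟩, ?_⟩, heq⟩
  rintro v ⟨z, hz, rfl⟩
  rw [hf]
  have hz0 : 0 ≤ z + ε := by linarith
  set t := Real.sqrt (z + ε) with ht_def
  have ht0 : 0 ≤ t := Real.sqrt_nonneg _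
  have ht2 : t ^ 2 = z + ε := Real.sq_sqrt hz0
  rw [rpow32 _ hz0, hy3, hs3, ← ht_def]
  have key : 0 ≤ (2 / 3) * (t - (u + s) / 2) ^ 2 * (t - u / 2 + s) := by
    have : 0 ≤ t - u / 2 + s := by nlinarith
    positivity
  have hE : u ^ 3 / 6 + s ^ 3 / 6 + u * y
      - (u * t ^ 2 - (2 / 3) * t ^ 3 + 2 * y * t)
      = (2 / 3) * (t - (u + s) / 2) ^ 2 * (t - u / 2 + s) := by
    linear_combination (t / 2 - u / 4) * hs2
  have hzz : z = t ^ 2 - ε := by rw [ht2]; ring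
  rw [hzz]
  nlinarith [key, hE]
end

section
/- Let y > 0, ε > 0 and u < 1. Define f(z) = y·log(y/(z+ε)) + z + ε − y for z > −ε. Then the value −y·log(1−u) − ε·u is the greatest element of the set {z·u − f(z) : z ∈ ℝ, z > −ε}; in particular the supremum is attained (at z = y/(1−u) − ε) and equals this value. -/
/-- **Fenchel conjugate of the ε-smoothed Kullback–Leibler data term**: for `y > 0`,
`ε > 0` and `u < 1`, `sup_{z > -ε} (z u - (y log(y/(z+ε)) + z + ε - y)) = -y log(1-u) - ε u`,
attained at `z = y/(1-u) - ε`. -/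
theorem stmt_6 (y ε u : ℝ) (hy : 0 < y) (hε : 0 < ε) (hu : u < 1)
    (f : ℝ → ℝ) (hf : ∀ z : ℝ, f z = y * Real.log (y / (z + ε)) + z + ε - y) :
    IsGreatest {v : ℝ | ∃ z : ℝ, -ε < z ∧ v = z * u - f z}
      (-y * Real.log (1 - u) - ε * u)
    ∧ -y * Real.log (1 - u) - ε * u
      = (y / (1 - u) - ε) * u - f (y / (1 - u) - ε) := by
  have h1u : 0 < 1 - u := by linarith
  set s := y / (1 - u) with hsdef
  have hs : 0 < s := div_pos hy h1u
  have hys : y / s = 1 - u := by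
    rw [hsdef]; field_simp
  have heq : -y * Real.log (1 - u) - ε * u = (s - ε) * u - f (s - ε) := by
    rw [hf]
    have h1 : s - ε + ε = s := by ring
    rw [h1, hys]
    have h2 : s * (1 - u) = y := by rw [hsdef]; field_simp
    nlinarith [h2]
  have key : ∀ z : ℝ, -ε < z → z * u - f z ≤ -y * Real.log (1 - u) - ε * u := by
    intro z hz
    have ht : 0 < z + ε := by linarith
    rw [hf]
    have hlog : Real.log ((z + ε) / s) ≤ (z + ε) / s - 1 :=
      Real.log_le_sub_one_of_pos (div_pos ht hs)
    rw [Real.log_div ht.ne' hs.ne'] at hlog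
    have hlogs : Real.log s = Real.log y - Real.log (1 - u) :=
      Real.log_div hy.ne' h1u.ne'
    have hlogyd : Real.log (y / (z + ε)) = Real.log y - Real.log (z + ε) :=
      Real.log_div hy.ne' ht.ne'
    have hdiv : y * ((z + ε) / s) = (z + ε) * (1 - u) := by
      rw [← hys]; field_simp
    have hmul : y * (Real.log (z + ε) - Real.log s) ≤ y * ((z + ε) / s - 1) :=
      mul_le_mul_of_nonneg_left hlog hy.le
    rw [mul_sub, mul_sub, hdiv] at hmul
    rw [hlogyd]
    nlinarith [hmul, hlogs]
  refine ⟨⟨⟨s - ε, by linarith, heq⟩, ?_⟩, heq⟩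
  rintro v ⟨z, hz, rfl⟩
  exact key z hz
end

section
/- Let A be an m×n real matrix with nonnegative entries a_{ij} such that every row of A has at least one nonzero entry, let y ∈ ℝ^m with y_i ≥ 0 for all i, let λ > 0, and let ε > 0 with 3ε < 1. Define D_λ(θ) = Σ_{i=1}^m (λθ_i)³/6 − ((λθ_i)² + 4y_i)^{3/2}/6 + λθ_i y_i + (4/3)y_i^{3/2} − ελθ_i, the feasible set Δ_A = {θ ∈ ℝ^m : Σ_i a_{ij} θ_i ≤ 1 for all j}, the constant c = −(1/λ)·((4 Σ_i y_i^{3/2} + 2(m−1)ε^{3/2} + 3ε)/(1 − 3ε))^{1/3}, and for each i the constant b_i = λ·min_{j : a_{ij} ≠ 0} ((1 − c·Σ_{i'} a_{i'j})/a_{ij}) + λc. Suppose θ⋆ ∈ Δ_A satisfies D_λ(θ') ≤ D_λ(θ⋆) for all θ' ∈ Δ_A, and suppose there exists x⋆ ∈ ℝ^n with x⋆ ≥ 0 componentwise such that λθ⋆_i = (y_i − (Ax⋆)_i − ε)/√((Ax⋆)_i + ε) for all i. Then for every i ∈ {1,…,m}: c ≤ θ⋆_i and λθ⋆_i ≤ min(b_i,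 (y_i − ε)/√ε). -/
set_option maxHeartbeats 1000000

lemma sq_rpow32 (s : ℝ) (hs : 0 ≤ s) : (s ^ 2 : ℝ) ^ ((3:ℝ)/2) = s ^ 3 := by
  rw [← Real.rpow_natCast s 2, ← Real.rpow_mul hs, ← Real.rpow_natCast s 3]
  norm_num

lemma cube_amgm (a t : ℝ) (ha : 0 ≤ a) (ht : 0 ≤ t) : 3 * a^2 * t ≤ t^3 + 2*a^3 := by
  nlinarith [mul_nonneg (sq_nonneg (t - a)) (by linarith : (0:ℝ) ≤ t + 2*a)]

/-- **Validity of the set S₀ for the ε-smoothed β = 1.5 divergence**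
(Proposition 14 of the paper): the dual optimum `θs` (maximizer of `D` over the
feasible set, linked to a nonnegative primal solution `xs` by
`λ θs = (y - A xs - ε)/√(A xs + ε)`) satisfies `c ≤ θs_i` and
`λ θs_i ≤ min(b_i, (y_i - ε)/√ε)` for every `i`. -/
theorem stmt_10 {m n : ℕ} (A : Matrix (Fin m) (Fin n) ℝ)
    (hA : ∀ i j, 0 ≤ A i j) (hrow : ∀ i, ∃ j, A i j ≠ 0)
    (y : Fin m → ℝ) (hy : ∀ i, 0 ≤ y i)
    (lam ε : ℝ) (hlam : 0 < lam) (hε : 0 < ε) (hε1 : 3 * ε < 1)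
    (D : (Fin m → ℝ) → ℝ)
    (hD : ∀ θ, D θ = ∑ i, ((lam * θ i) ^ 3 / 6
        - ((lam * θ i) ^ 2 + 4 * y i) ^ ((3 : ℝ) / 2) / 6
        + lam * θ i * y i + (4 / 3) * (y i) ^ ((3 : ℝ) / 2) - ε * (lam * θ i)))
    (c : ℝ)
    (hc : c = -(1 / lam) * ((4 * ∑ i, (y i) ^ ((3 : ℝ) / 2)
        + 2 * ((m : ℝ) - 1) * ε ^ ((3 : ℝ) / 2) + 3 * ε)
          / (1 - 3 * ε)) ^ ((1 : ℝ) / 3))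
    (b : Fin m → ℝ)
    (hb : ∀ i, b i = lam * sInf {v : ℝ | ∃ j, A i j ≠ 0
        ∧ v = (1 - c * ∑ i', A i' j) / A i j} + lam * c)
    (θs : Fin m → ℝ)
    (hθs : ∀ j, ∑ i, A i j * θs i ≤ 1)
    (hopt : ∀ θ' : Fin m → ℝ, (∀ j, ∑ i, A i j * θ' i ≤ 1) → D θ' ≤ D θs)
    (xs : Fin n → ℝ) (hxs : ∀ j, 0 ≤ xs j)
    (hlink : ∀ i, lam * θs i
        = (y i - A.mulVec xs i - ε) / Real.sqrt (A.mulVec xs i + ε)) :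
    ∀ i, c ≤ θs i ∧ lam * θs i ≤ min (b i) ((y i - ε) / Real.sqrt ε) := by
  have hεle : (0:ℝ) ≤ ε := hε.le
  set a : ℝ := Real.sqrt ε with ha_def
  have hapos : 0 < a := Real.sqrt_pos.mpr hε
  have ha2 : a ^ 2 = ε := Real.sq_sqrt hεle
  have hE : ε ^ ((3:ℝ)/2) = a ^ 3 := by
    rw [← ha2, sq_rpow32 a hapos.le]
  have hAx : ∀ i, 0 ≤ A.mulVec xs i := by
    intro i
    have : A.mulVec xs i = ∑ j, A i j * xs j := rfl
    rw [this]
    exact Finset.sum_nonneg fun j _ => mul_nonneg (hA i j) (hxs j)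
  set t : Fin m → ℝ := fun i => Real.sqrt (A.mulVec xs i + ε) with ht_def
  have hte : ∀ i, t i = Real.sqrt (A.mulVec xs i + ε) := fun i => by rw [ht_def]
  have htpos : ∀ i, 0 < t i := by
    intro i; rw [hte i]; exact Real.sqrt_pos.mpr (by linarith [hAx i])
  have ht2 : ∀ i, t i ^ 2 = A.mulVec xs i + ε := by
    intro i; rw [hte i]; exact Real.sq_sqrt (by linarith [hAx i])
  have hat : ∀ i, a ≤ t i := by
    intro i; rw [hte i, ha_def]
    exact Real.sqrt_le_sqrt (by linarith [hAx i])
  have hu : ∀ i, lam * θs i = (y i - t i ^ 2) / t i := by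
    intro i
    rw [ht2 i, hlink i, ← hte i]
    ring_nf
  set H : Fin m → ℝ := fun i =>
    ε * t i - t i ^ 3 / 3 - y i * t i - ε * y i / t i with hH_def
  have hHe : ∀ i, H i = ε * t i - t i ^ 3 / 3 - y i * t i - ε * y i / t i :=
    fun i => by rw [hH_def]
  have hDθs : D θs = ∑ i, ((4:ℝ)/3 * (y i) ^ ((3:ℝ)/2) + H i) := by
    rw [hD θs]
    apply Finset.sum_congr rfl
    intro i _
    have ht0 : t i ≠ 0 := (htpos i).ne'
    have hsq : (lam * θs i) ^ 2 + 4 * y i = (y i / t i + t i) ^ 2 := by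
      rw [hu i]; field_simp; ring
    rw [hsq, sq_rpow32 _ (add_nonneg (div_nonneg (hy i) (htpos i).le) (htpos i).le),
      hu i, hHe i]
    field_simp
    ring
  have hHle : ∀ i, H i ≤ 2/3 * a^3 := by
    intro i
    have h1 := cube_amgm a (t i) hapos.le (htpos i).le
    rw [ha2] at h1
    have h2 : 0 ≤ y i * t i := mul_nonneg (hy i) (htpos i).le
    have h3 : 0 ≤ ε * y i / t i := by
      have := hy i; have := (htpos i).le; positivity
    rw [hHe i]; linarith
  have hHle2 : ∀ i, H i ≤ 2/3 * ε + (ε - 1) * t i ^ 3 / 3 := by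
    intro i
    have h1 := cube_amgm 1 (t i) zero_le_one (htpos i).le
    have h1' := mul_le_mul_of_nonneg_left h1 hεle
    have h2 : 0 ≤ y i * t i := mul_nonneg (hy i) (htpos i).le
    have h3 : 0 ≤ ε * y i / t i := by
      have := hy i; have := (htpos i).le; positivity
    rw [hHe i]; nlinarith
  have hD0 : D (fun _ => 0) = 0 := by
    rw [hD]
    apply Finset.sum_eq_zero
    intro i _
    have hsy : 0 ≤ Real.sqrt (y i) := Real.sqrt_nonneg _
    have e1 : (y i) ^ ((3:ℝ)/2) = (Real.sqrt (y i))^3 := by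
      conv_lhs => rw [← Real.sq_sqrt (hy i)]
      rw [sq_rpow32 _ hsy]
    have e2 : ((lam * 0) ^ 2 + 4 * y i) ^ ((3:ℝ)/2) = 8 * (Real.sqrt (y i))^3 := by
      have e3 : (lam * 0) ^ 2 + 4 * y i = (2 * Real.sqrt (y i))^2 := by
        rw [show (2 * Real.sqrt (y i))^2 = 4 * (Real.sqrt (y i))^2 by ring,
          Real.sq_sqrt (hy i)]; ring
      rw [e3, sq_rpow32 _ (by positivity)]; ring
    rw [e1, e2]; ring
  have h0 : 0 ≤ D θs := by
    have hfeas : ∀ j, ∑ i, A i j * (fun _ => (0:ℝ)) i ≤ 1 := by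
      intro j; simp
    have := hopt (fun _ => 0) hfeas
    linarith [this, hD0.le, hD0.ge]
  set S : ℝ := ∑ i, (y i) ^ ((3:ℝ)/2) with hS_def
  have hSnn : 0 ≤ S := by
    rw [hS_def]
    exact Finset.sum_nonneg fun i _ => Real.rpow_nonneg (hy i) _
  have ha_all : ∀ i, c ≤ θs i := by
    intro i0
    have heq : D θs = 4/3 * S + (∑ i ∈ Finset.univ.erase i0, H i + H i0) := by
      rw [hDθs, Finset.sum_add_distrib, ← Finset.mul_sum, ← hS_def,
        Finset.sum_erase_add _ _ (Finset.mem_univ i0)]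
    have hcard : (Finset.univ.erase i0).card = m - 1 := by
      rw [Finset.card_erase_of_mem (Finset.mem_univ i0), Finset.card_univ,
        Fintype.card_fin]
    have hm1 : 1 ≤ m := i0.pos
    have hcast : ((m - 1 : ℕ) : ℝ) = (m:ℝ) - 1 := by
      rw [Nat.cast_sub hm1, Nat.cast_one]
    have herase : ∑ i ∈ Finset.univ.erase i0, H i ≤ ((m:ℝ) - 1) * (2/3 * a^3) := by
      have h' := Finset.sum_le_card_nsmul (Finset.univ.erase i0) H (2/3 * a^3)
        (fun i _ => hHle i)
      rw [hcard, nsmul_eq_mul, hcast] at h'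
      exact h'
    have hmain : (1 - 3*ε) * t i0 ^ 3 ≤ 4 * S + 2*((m:ℝ)-1) * ε ^ ((3:ℝ)/2) + 3*ε := by
      rw [hE]
      have h1 := hHle2 i0
      have h2 : 0 ≤ ε * t i0 ^ 3 := by
        have := (htpos i0).le; positivity
      have h0' : 0 ≤ 4/3 * S + (∑ i ∈ Finset.univ.erase i0, H i + H i0) := by
        rw [← heq]; exact h0
      nlinarith [herase, h1, h2, h0']
    set X : ℝ := (4 * S + 2 * ((m : ℝ) - 1) * ε ^ ((3:ℝ)/2) + 3 * ε) / (1 - 3 * ε)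
      with hX_def
    have htX : t i0 ^ 3 ≤ X := by
      rw [hX_def, le_div_iff₀ (by linarith : (0:ℝ) < 1 - 3*ε)]
      linarith [hmain]
    have hXnn : 0 ≤ X := le_trans (by positivity) htX
    have hR3 : (X ^ ((1:ℝ)/3)) ^ 3 = X := by
      rw [← Real.rpow_natCast (X ^ ((1:ℝ)/3)) 3, ← Real.rpow_mul hXnn]
      norm_num
    have hRnn : 0 ≤ X ^ ((1:ℝ)/3) := Real.rpow_nonneg hXnn _
    have htR : t i0 ≤ X ^ ((1:ℝ)/3) := by
      by_contra hlt
      push_neg at hlt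
      have h5 : (X ^ ((1:ℝ)/3)) ^ 3 < t i0 ^ 3 :=
        pow_lt_pow_left₀ hlt hRnn (by norm_num)
      rw [hR3] at h5
      linarith [htX]
    have hlc : lam * c = -(X ^ ((1:ℝ)/3)) := by
      rw [hc]
      field_simp
    have hfinal : lam * c ≤ lam * θs i0 := by
      rw [hlc, hu i0, le_div_iff₀ (htpos i0)]
      nlinarith [mul_le_mul_of_nonneg_right htR (htpos i0).le, hy i0]
    exact le_of_mul_le_mul_left hfinal hlam
  intro i
  refine ⟨ha_all i, le_min ?_ ?_⟩
  · obtain ⟨j0, hj0⟩ := hrow i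
    have hlb : ∀ v ∈ {v : ℝ | ∃ j, A i j ≠ 0
        ∧ v = (1 - c * ∑ i', A i' j) / A i j}, θs i - c ≤ v := by
      rintro v ⟨j, hj, rfl⟩
      have hAij : 0 < A i j := (hA i j).lt_of_ne (Ne.symm hj)
      rw [le_div_iff₀ hAij]
      have hfe := hθs j
      have hsum1 : A i j * θs i + ∑ i' ∈ Finset.univ.erase i, A i' j * θs i'
          = ∑ i', A i' j * θs i' :=
        Finset.add_sum_erase _ (fun i' => A i' j * θs i') (Finset.mem_univ i)
      have hsum2 : A i j * c + ∑ i' ∈ Finset.univ.erase i, A i' j * c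
          = ∑ i', A i' j * c :=
        Finset.add_sum_erase _ (fun i' => A i' j * c) (Finset.mem_univ i)
      have hge : ∑ i' ∈ Finset.univ.erase i, A i' j * c
          ≤ ∑ i' ∈ Finset.univ.erase i, A i' j * θs i' :=
        Finset.sum_le_sum fun i' _ => mul_le_mul_of_nonneg_left (ha_all i') (hA i' j)
      have hcs : ∑ i', A i' j * c = (∑ i', A i' j) * c := by
        rw [Finset.sum_mul]
      nlinarith [hfe, hsum1, hsum2, hge, hcs]
    have hsinf : θs i - c ≤ sInf {v : ℝ | ∃ j, A i j ≠ 0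
        ∧ v = (1 - c * ∑ i', A i' j) / A i j} :=
      le_csInf ⟨_, ⟨j0, hj0, rfl⟩⟩ hlb
    rw [hb i]
    have := mul_le_mul_of_nonneg_left hsinf hlam.le
    nlinarith [this]
  · rw [hu i, div_le_div_iff₀ (htpos i) hapos, ← ha2]
    nlinarith [mul_nonneg (sub_nonneg.mpr (hat i))
      (add_nonneg (hy i) (mul_nonneg hapos.le (htpos i).le))]
end

section
/- Let y ∈ ℝ^m with y_i ≥ 0, λ > 0, ε > 0 with 3ε < 1, and let A be an m×n matrix with nonnegative entries and no all-zero row, with c and b_i defined as for the β = 1.5 problem (c = −(1/λ)((4Σ_i y_i^{3/2} + 2(m−1)ε^{3/2} + 3ε)/(1−3ε))^{1/3}; b_i = λ·min_{j: a_{ij}≠0}((1 − c Σ_{i'} a_{i'j})/a_{ij}) + λc). Define D_λ(θ) = Σ_i (λθ_i)³/6 − ((λθ_i)² + 4y_i)^{3/2}/6 + λθ_i y_i + (4/3)y_i^{3/2} − ελθ_i and S₀ = {θ ∈ ℝ^m : λθ_i ≤ min(b_i, (y_i−ε)/√ε) for all i}. Let θ̄ ∈ S₀ and r ≥ 0, and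 set d_i = min(λ(θ̄_i + r), b_i, (y_i − ε)/√ε) and α = min_{i∈{1,…,m}} λ²( (d_i² + 2y_i)/√(d_i² + 4y_i) − d_i ). Then D_λ is α-strongly concave on B(θ̄, r) ∩ S₀, where B(θ̄, r) = {θ ∈ ℝ^m : ‖θ − θ̄‖ ≤ r} is the closed Euclidean ball. -/
open Real Set

noncomputable def Ff (Y ε x : ℝ) : ℝ :=
  x^3/6 - (x^2+4*Y)^((3:ℝ)/2)/6 + x*Y + 4/3*Y^((3:ℝ)/2) - ε*x

noncomputable def Ff' (Y ε x : ℝ) : ℝ := x^2/2 - x*Real.sqrt (x^2+4*Y)/2 + Y - ε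

noncomputable def Gg (Y x : ℝ) : ℝ := (x^2+2*Y)/Real.sqrt (x^2+4*Y) - x

lemma hasDerivAt_Ff (Y ε x : ℝ) : HasDerivAt (Ff Y ε) (Ff' Y ε x) x := by
  have hu : HasDerivAt (fun x : ℝ => x^2 + 4*Y) (2*x) x := by
    simpa using ((hasDerivAt_pow 2 x).add_const (4*Y))
  have hrpow : HasDerivAt (fun u : ℝ => u ^ ((3:ℝ)/2)) ((3/2) * (x^2+4*Y) ^ ((3:ℝ)/2 - 1)) (x^2+4*Y) :=
    Real.hasDerivAt_rpow_const (Or.inr (by norm_num))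
  have hcomp : HasDerivAt (fun x : ℝ => (x^2+4*Y) ^ ((3:ℝ)/2))
      ((3/2) * (x^2+4*Y) ^ ((3:ℝ)/2 - 1) * (2*x)) x := by
    have := hrpow.comp x hu; exact this
  have h1 : HasDerivAt (fun x : ℝ => x^3/6) (3*x^2/6) x := by
    simpa using (hasDerivAt_pow 3 x).div_const 6
  have h3 : HasDerivAt (fun x : ℝ => x*Y) Y x := by simpa using (hasDerivAt_id x).mul_const Y
  have h5 : HasDerivAt (fun x : ℝ => ε*x) ε x := by simpa using (hasDerivAt_id x).const_mul ε
  have := (((h1.sub (hcomp.div_const 6)).add h3).add_const (4/3*Y^((3:ℝ)/2))).sub h5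
  refine this.congr_deriv ?_
  have : (x^2+4*Y) ^ ((3:ℝ)/2 - 1) = Real.sqrt (x^2+4*Y) := by
    rw [Real.sqrt_eq_rpow]; norm_num
  rw [Ff']
  rw [this]
  ring

lemma hasDerivAt_Ff' {Y x : ℝ} (ε : ℝ) (hu : 0 < x^2 + 4*Y) :
    HasDerivAt (Ff' Y ε) (-(Gg Y x)) x := by
  set u : ℝ := x^2 + 4*Y with hudef
  have hs : 0 < Real.sqrt u := Real.sqrt_pos.mpr hu
  have hsq : Real.sqrt u ^ 2 = u := Real.sq_sqrt hu.le
  have huder : HasDerivAt (fun x : ℝ => x^2 + 4*Y) (2*x) x := by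
    simpa using ((hasDerivAt_pow 2 x).add_const (4*Y))
  have hsqrt : HasDerivAt (fun x : ℝ => Real.sqrt (x^2+4*Y)) (1/(2*Real.sqrt u) * (2*x)) x :=
    (Real.hasDerivAt_sqrt hu.ne').comp x huder
  have h1 : HasDerivAt (fun x : ℝ => x^2/2) x x := by
    simpa using (hasDerivAt_pow 2 x).div_const 2
  have h2 : HasDerivAt (fun x : ℝ => x * Real.sqrt (x^2+4*Y) / 2)
      ((1 * Real.sqrt u + x * (1/(2*Real.sqrt u) * (2*x)))/2) x :=
    ((hasDerivAt_id x).mul hsqrt).div_const 2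
  have := ((h1.sub h2).add_const Y).sub_const ε
  refine this.congr_deriv ?_
  rw [Gg, ← hudef]
  field_simp
  nlinarith [hsq]

lemma Gg_deriv_nonpos {Y x : ℝ} (hY : 0 ≤ Y) (hu : 0 < x^2 + 4*Y) :
    HasDerivAt (Gg Y) ((2*x*Real.sqrt (x^2+4*Y) - (x^2+2*Y)*(x/Real.sqrt (x^2+4*Y)))/(x^2+4*Y) - 1) x
    ∧ (2*x*Real.sqrt (x^2+4*Y) - (x^2+2*Y)*(x/Real.sqrt (x^2+4*Y)))/(x^2+4*Y) - 1 ≤ 0 := by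
  set u : ℝ := x^2 + 4*Y with hudef
  have hs : 0 < Real.sqrt u := Real.sqrt_pos.mpr hu
  have hsq : Real.sqrt u ^ 2 = u := Real.sq_sqrt hu.le
  constructor
  · have huder : HasDerivAt (fun x : ℝ => x^2 + 4*Y) (2*x) x := by
      simpa using ((hasDerivAt_pow 2 x).add_const (4*Y))
    have hsqrt : HasDerivAt (fun x : ℝ => Real.sqrt (x^2+4*Y)) (1/(2*Real.sqrt u) * (2*x)) x :=
      (Real.hasDerivAt_sqrt hu.ne').comp x huder
    have hnum : HasDerivAt (fun x : ℝ => x^2 + 2*Y) (2*x) x := by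
      simpa using ((hasDerivAt_pow 2 x).add_const (2*Y))
    have hdiv := hnum.div hsqrt hs.ne'
    have := hdiv.sub (hasDerivAt_id x)
    refine this.congr_deriv ?_
    rw [hsq]
    field_simp
    ring
  · have key : (x^3 + 6*x*Y) ≤ u * Real.sqrt u := by
      have h1 : (x^3 + 6*x*Y)^2 ≤ (u * Real.sqrt u)^2 := by
        have h2 : (u * Real.sqrt u)^2 = u^3 := by
          rw [mul_pow, hsq]; ring
        rw [h2, hudef]
        nlinarith [mul_nonneg (sq_nonneg x) (mul_nonneg hY hY), pow_nonneg hY 3, sq_nonneg (x*Y)]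
      calc x^3 + 6*x*Y ≤ |x^3 + 6*x*Y| := le_abs_self _
        _ = Real.sqrt ((x^3 + 6*x*Y)^2) := (Real.sqrt_sq_eq_abs _).symm
        _ ≤ Real.sqrt ((u * Real.sqrt u)^2) := Real.sqrt_le_sqrt h1
        _ = u * Real.sqrt u := by
            rw [Real.sqrt_sq_eq_abs, abs_of_nonneg (by positivity)]
    have hexp : 2*x*Real.sqrt u - (x^2+2*Y)*(x/Real.sqrt u)
        = (x^3 + 6*x*Y) / Real.sqrt u := by
      field_simp
      linear_combination 2*x*hsq + 2*x*hudef
    rw [sub_nonpos, div_le_one hu, hexp, div_le_iff₀ hs]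
    nlinarith [key, hs, hsq]

lemma upos {Y ε x : ℝ} (hY : 0 ≤ Y) (hε : 0 < ε) (hx : x ≤ (Y - ε)/Real.sqrt ε) :
    0 < x^2 + 4*Y := by
  rcases hY.lt_or_eq with h | h
  · nlinarith [sq_nonneg x]
  · have hs : 0 < Real.sqrt ε := Real.sqrt_pos.mpr hε
    have : (0 - ε)/Real.sqrt ε < 0 := by
      apply div_neg_of_neg_of_pos (by linarith) hs
    subst h
    nlinarith

lemma Gg_antitone {Y ε dv : ℝ} (hY : 0 ≤ Y) (hε : 0 < ε)
    (hdle : dv ≤ (Y - ε)/Real.sqrt ε) : ∀ x ≤ dv, Gg Y dv ≤ Gg Y x := by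
  have hant : AntitoneOn (Gg Y) (Set.Iic dv) := by
    have hupos : ∀ x ∈ Set.Iic dv, 0 < x^2 + 4*Y := fun x hx =>
      upos hY hε (le_trans hx hdle)
    apply antitoneOn_of_deriv_nonpos (convex_Iic dv)
    · intro x hx
      exact ((Gg_deriv_nonpos hY (hupos x hx)).1).continuousAt.continuousWithinAt
    · intro x hx
      rw [interior_Iic] at hx
      exact ((Gg_deriv_nonpos hY (hupos x (Set.mem_Iio.mp hx).le)).1).differentiableAt.differentiableWithinAt
    · intro x hx
      rw [interior_Iic] at hx
      obtain ⟨h1, h2⟩ := Gg_deriv_nonpos hY (hupos x (Set.mem_Iio.mp hx).le)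
      rw [h1.deriv]; exact h2
  intro x hx
  exact hant hx (Set.mem_Iic.mpr le_rfl) hx

lemma h_convex {Y ε dv κ : ℝ} (hY : 0 ≤ Y) (hε : 0 < ε)
    (hdle : dv ≤ (Y - ε)/Real.sqrt ε) (hκ : κ ≤ Gg Y dv) :
    ConvexOn ℝ (Set.Iic dv) (fun x => -(Ff Y ε x) - κ/2 * x^2) := by
  set h : ℝ → ℝ := fun x => -(Ff Y ε x) - κ/2 * x^2 with hh
  have hder1 : ∀ x : ℝ, HasDerivAt h (-(Ff' Y ε x) - κ * x) x := by
    intro x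
    have h2 : HasDerivAt (fun x : ℝ => κ/2 * x^2) (κ/2 * (2*x)) x := by
      simpa using ((hasDerivAt_pow 2 x).const_mul (κ/2))
    have := ((hasDerivAt_Ff Y ε x).neg).sub h2
    refine this.congr_deriv ?_; ring
  have hderiv_eq : deriv h = fun x => -(Ff' Y ε x) - κ * x := by
    funext x; exact (hder1 x).deriv
  apply convexOn_of_deriv2_nonneg (convex_Iic dv)
  · exact fun x _ => (hder1 x).continuousAt.continuousWithinAt
  · exact fun x _ => (hder1 x).differentiableAt.differentiableWithinAt
  · intro x hx
    rw [interior_Iic] at hx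
    have hu : 0 < x^2 + 4*Y := upos hY hε (le_trans (le_of_lt hx) hdle)
    have : HasDerivAt (fun x => -(Ff' Y ε x) - κ * x) (Gg Y x - κ) x := by
      have := ((hasDerivAt_Ff' ε hu).neg).sub ((hasDerivAt_id x).const_mul κ)
      refine this.congr_deriv ?_; simp [Gg]
    rw [hderiv_eq]
    exact this.differentiableAt.differentiableWithinAt
  · intro x hx
    rw [interior_Iic] at hx
    have hu : 0 < x^2 + 4*Y := upos hY hε (le_trans (le_of_lt hx) hdle)
    have hder2 : HasDerivAt (fun x => -(Ff' Y ε x) - κ * x) (Gg Y x - κ) x := by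
      have := ((hasDerivAt_Ff' ε hu).neg).sub ((hasDerivAt_id x).const_mul κ)
      refine this.congr_deriv ?_; simp [Gg]
    have : deriv^[2] h x = Gg Y x - κ := by
      simp only [Function.iterate_succ, Function.iterate_zero, Function.comp_apply, id]
      rw [hderiv_eq]
      exact hder2.deriv
    rw [this]
    have := Gg_antitone hY hε hdle x (le_of_lt hx)
    linarith

lemma coord_ineq {Y ε dv κ x₁ x₂ t : ℝ} (hY : 0 ≤ Y) (hε : 0 < ε)
    (hdle : dv ≤ (Y - ε)/Real.sqrt ε) (hκ : κ ≤ Gg Y dv)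
    (h1 : x₁ ≤ dv) (h2 : x₂ ≤ dv) (ht0 : 0 ≤ t) (ht1 : t ≤ 1) :
    t * Ff Y ε x₁ + (1-t) * Ff Y ε x₂ + κ/2 * t * (1-t) * (x₁-x₂)^2
      ≤ Ff Y ε (t*x₁ + (1-t)*x₂) := by
  have hc := (h_convex hY hε hdle hκ).2 (Set.mem_Iic.mpr h1) (Set.mem_Iic.mpr h2)
    ht0 (sub_nonneg.mpr ht1) (by ring : t + (1 - t) = 1)
  simp only [smul_eq_mul] at hc
  have hid : t*x₁^2 + (1-t)*x₂^2 - (t*x₁+(1-t)*x₂)^2 = t*(1-t)*(x₁-x₂)^2 := by ring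
  nlinarith [hc, hid]

/-- **Ball-local strong concavity of the β = 1.5 dual function**
(Proposition 16 of the paper): with `d_i = min(λ(θ̄_i + r), b_i, (y_i - ε)/√ε)` and
`α = min_i λ²((d_i² + 2y_i)/√(d_i² + 4y_i) - d_i)`, the dual function `D_λ` is
`α`-strongly concave on `B(θ̄, r) ∩ S₀`. -/
theorem stmt_12 {m n : ℕ} (hm : 0 < m) (A : Matrix (Fin m) (Fin n) ℝ)
    (hA : ∀ i j, 0 ≤ A i j) (hrow : ∀ i, ∃ j, A i j ≠ 0)
    (y : Fin m → ℝ) (hy : ∀ i, 0 ≤ y i)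
    (lam ε : ℝ) (hlam : 0 < lam) (hε : 0 < ε) (hε1 : 3 * ε < 1)
    (D : EuclideanSpace ℝ (Fin m) → ℝ)
    (hD : ∀ θ, D θ = ∑ i, ((lam * θ i) ^ 3 / 6
        - ((lam * θ i) ^ 2 + 4 * y i) ^ ((3 : ℝ) / 2) / 6
        + lam * θ i * y i + (4 / 3) * (y i) ^ ((3 : ℝ) / 2) - ε * (lam * θ i)))
    (c : ℝ)
    (hc : c = -(1 / lam) * ((4 * ∑ i, (y i) ^ ((3 : ℝ) / 2)
        + 2 * ((m : ℝ) - 1) * ε ^ ((3 : ℝ) / 2) + 3 * ε)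
          / (1 - 3 * ε)) ^ ((1 : ℝ) / 3))
    (b : Fin m → ℝ)
    (hb : ∀ i, b i = lam * sInf {v : ℝ | ∃ j, A i j ≠ 0
        ∧ v = (1 - c * ∑ i', A i' j) / A i j} + lam * c)
    (S₀ : Set (EuclideanSpace ℝ (Fin m)))
    (hS₀ : S₀ = {θ | ∀ i, lam * θ i ≤ min (b i) ((y i - ε) / Real.sqrt ε)})
    (θb : EuclideanSpace ℝ (Fin m)) (hθb : θb ∈ S₀) (r : ℝ) (hr : 0 ≤ r)
    (d : Fin m → ℝ)
    (hd : ∀ i, d i = min (lam * (θb i + r)) (min (b i) ((y i - ε) / Real.sqrt ε)))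
    (α : ℝ)
    (hα : α = sInf {v : ℝ | ∃ i : Fin m, v = lam ^ 2 *
        ((d i ^ 2 + 2 * y i) / Real.sqrt (d i ^ 2 + 4 * y i) - d i)}) :
    ∀ θ₁ ∈ Metric.closedBall θb r ∩ S₀, ∀ θ₂ ∈ Metric.closedBall θb r ∩ S₀,
      ∀ t : ℝ, 0 ≤ t → t ≤ 1 →
        t * D θ₁ + (1 - t) * D θ₂ + α / 2 * t * (1 - t) * ‖θ₁ - θ₂‖ ^ 2
          ≤ D (t • θ₁ + (1 - t) • θ₂) := by
  intro θ₁ h₁ θ₂ h₂ t ht0 ht1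
  obtain ⟨hball₁, hS₁⟩ := h₁
  obtain ⟨hball₂, hS₂⟩ := h₂
  rw [hS₀] at hS₁ hS₂
  -- coordinate bound from the ball
  have hcoord : ∀ (θ : EuclideanSpace ℝ (Fin m)), θ ∈ Metric.closedBall θb r →
      ∀ i, θ i ≤ θb i + r := by
    intro θ hθ i
    have h1 : |θ i - θb i| ≤ ‖θ - θb‖ := by
      rw [EuclideanSpace.norm_eq]
      have h2 : |θ i - θb i| = Real.sqrt (‖(θ - θb) i‖ ^ 2) := by
        rw [Real.sqrt_sq_eq_abs]
        simp [Real.norm_eq_abs, abs_abs]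
      rw [h2]
      apply Real.sqrt_le_sqrt
      exact Finset.single_le_sum (f := fun j => ‖(θ - θb) j‖ ^ 2)
        (fun j _ => sq_nonneg _) (Finset.mem_univ i)
    have h3 : ‖θ - θb‖ ≤ r := by
      rw [← dist_eq_norm]
      exact Metric.mem_closedBall.mp hθ
    have := abs_le.mp (le_trans h1 h3)
    linarith [this.2]
  -- membership of lam * θ i in Iic (d i)
  have hmem : ∀ (θ : EuclideanSpace ℝ (Fin m)), θ ∈ Metric.closedBall θb r →
      (∀ i, lam * θ i ≤ min (b i) ((y i - ε) / Real.sqrt ε)) →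
      ∀ i, lam * θ i ≤ d i := by
    intro θ hθ hS i
    rw [hd]
    apply le_min _ (hS i)
    exact mul_le_mul_of_nonneg_left (hcoord θ hθ i) hlam.le
  have hdle : ∀ i, d i ≤ (y i - ε) / Real.sqrt ε := by
    intro i
    rw [hd]
    exact le_trans (min_le_right _ _) (min_le_right _ _)
  -- α is below each element
  have hαle : ∀ i, α ≤ lam ^ 2 * Gg (y i) (d i) := by
    intro i
    rw [hα]
    apply csInf_le
    · have hset : {v : ℝ | ∃ i : Fin m, v = lam ^ 2 *
          ((d i ^ 2 + 2 * y i) / Real.sqrt (d i ^ 2 + 4 * y i) - d i)}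
          = Set.range (fun i : Fin m => lam ^ 2 *
          ((d i ^ 2 + 2 * y i) / Real.sqrt (d i ^ 2 + 4 * y i) - d i)) := by
        ext v; simp [eq_comm]
      rw [hset]
      exact (Set.finite_range _).bddBelow
    · exact ⟨i, rfl⟩
  have hl2 : (0:ℝ) < lam ^ 2 := by positivity
  have hκ : ∀ i, α / lam ^ 2 ≤ Gg (y i) (d i) := by
    intro i
    rw [div_le_iff₀ hl2, mul_comm]
    exact hαle i
  -- per-coordinate inequality
  have key : ∀ i : Fin m,
      t * Ff (y i) ε (lam * θ₁ i) + (1 - t) * Ff (y i) ε (lam * θ₂ i)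
        + α / 2 * t * (1 - t) * (θ₁ i - θ₂ i) ^ 2
      ≤ Ff (y i) ε (lam * ((t • θ₁ + (1 - t) • θ₂) i)) := by
    intro i
    have hco := coord_ineq (hy i) hε (hdle i) (hκ i)
      (hmem θ₁ hball₁ hS₁ i) (hmem θ₂ hball₂ hS₂ i) ht0 ht1
    have hmid : lam * ((t • θ₁ + (1 - t) • θ₂) i)
        = t * (lam * θ₁ i) + (1 - t) * (lam * θ₂ i) := by
      simp only [PiLp.add_apply, PiLp.smul_apply, smul_eq_mul]
      ring
    rw [hmid]
    have hterm : α / lam ^ 2 / 2 * t * (1 - t) * (lam * θ₁ i - lam * θ₂ i) ^ 2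
        = α / 2 * t * (1 - t) * (θ₁ i - θ₂ i) ^ 2 := by
      field_simp
    linarith [hco, hterm]
  -- assemble
  have hnorm : ‖θ₁ - θ₂‖ ^ 2 = ∑ i, (θ₁ i - θ₂ i) ^ 2 := by
    rw [EuclideanSpace.norm_eq, Real.sq_sqrt (by positivity)]
    apply Finset.sum_congr rfl
    intro i _
    simp [Real.norm_eq_abs, sq_abs]
  rw [hD θ₁, hD θ₂, hD (t • θ₁ + (1 - t) • θ₂), hnorm]
  calc t * ∑ i, ((lam * θ₁ i) ^ 3 / 6
        - ((lam * θ₁ i) ^ 2 + 4 * y i) ^ ((3 : ℝ) / 2) / 6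
        + lam * θ₁ i * y i + (4 / 3) * (y i) ^ ((3 : ℝ) / 2) - ε * (lam * θ₁ i))
      + (1 - t) * ∑ i, ((lam * θ₂ i) ^ 3 / 6
        - ((lam * θ₂ i) ^ 2 + 4 * y i) ^ ((3 : ℝ) / 2) / 6
        + lam * θ₂ i * y i + (4 / 3) * (y i) ^ ((3 : ℝ) / 2) - ε * (lam * θ₂ i))
      + α / 2 * t * (1 - t) * ∑ i, (θ₁ i - θ₂ i) ^ 2
      = ∑ i, (t * Ff (y i) ε (lam * θ₁ i) + (1 - t) * Ff (y i) ε (lam * θ₂ i)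
          + α / 2 * t * (1 - t) * (θ₁ i - θ₂ i) ^ 2) := by
        rw [Finset.mul_sum, Finset.mul_sum, Finset.mul_sum,
          ← Finset.sum_add_distrib, ← Finset.sum_add_distrib]
        rfl
    _ ≤ ∑ i, Ff (y i) ε (lam * ((t • θ₁ + (1 - t) • θ₂) i)) :=
        Finset.sum_le_sum (fun i _ => key i)
    _ = ∑ i, ((lam * (t • θ₁ + (1 - t) • θ₂) i) ^ 3 / 6
        - ((lam * (t • θ₁ + (1 - t) • θ₂) i) ^ 2 + 4 * y i) ^ ((3 : ℝ) / 2) / 6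
        + lam * (t • θ₁ + (1 - t) • θ₂) i * y i + (4 / 3) * (y i) ^ ((3 : ℝ) / 2)
        - ε * (lam * (t • θ₁ + (1 - t) • θ₂) i)) := rfl
end

section
/- Let A be an m×n real matrix with nonnegative entries a_{ij} and no all-zero row, y ∈ ℝ^m with y_i ≥ 0, λ > 0, ε > 0 with 3ε < 1, and x ∈ ℝ^n with x ≥ 0 componentwise. Define ρ_i = (y_i − (Ax)_i − ε)/√((Ax)_i + ε), the scaling Ξ(z) = z / max( max_{j} (Aᵀz)_j , 1 ) for z ∈ ℝ^m, and, with c and b_i as for the β = 1.5 problem (c = −(1/λ)((4Σ_i y_i^{3/2} + 2(m−1)ε^{3/2} + 3ε)/(1−3ε))^{1/3}; b_i = λ·min_{j: a_{ij}≠0}((1 − c Σ_{i'} a_{i'j})/a_{ij}) + λc), the point Θ_i = min( [Ξ(ρ/λ)]_i , b_i/λ , (y_i − ε)/(λ√ε) ). Then Σ_i a_{ij} Θ_i ≤ 1 for every j ∈ {1,…,n}, and λΘ_i ≤ min(b_i, (y_i − ε)/√ε) for every i ∈ {1,…,m}. -/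
/-- **Dual update for the ε-smoothed β = 1.5 divergence** (Proposition 17 of the
paper): the point `Θ_i = min([Ξ(ρ/λ)]_i, b_i/λ, (y_i - ε)/(λ√ε))`, built from the
generalized residual `ρ` of a nonnegative primal point `x` by rescaling and clipping,
belongs to `Δ_A ∩ S₀`, i.e. `AᵀΘ ≤ 1` and `λΘ_i ≤ min(b_i, (y_i - ε)/√ε)`. -/
theorem stmt_13 {m n : ℕ} (hn : 0 < n) (A : Matrix (Fin m) (Fin n) ℝ)
    (hA : ∀ i j, 0 ≤ A i j) (hrow : ∀ i, ∃ j, A i j ≠ 0)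
    (y : Fin m → ℝ) (hy : ∀ i, 0 ≤ y i)
    (lam ε : ℝ) (hlam : 0 < lam) (hε : 0 < ε) (hε1 : 3 * ε < 1)
    (x : Fin n → ℝ) (hx : ∀ j, 0 ≤ x j)
    (ρ : Fin m → ℝ)
    (hρ : ∀ i, ρ i = (y i - A.mulVec x i - ε) / Real.sqrt (A.mulVec x i + ε))
    (c : ℝ)
    (hc : c = -(1 / lam) * ((4 * ∑ i, (y i) ^ ((3 : ℝ) / 2)
        + 2 * ((m : ℝ) - 1) * ε ^ ((3 : ℝ) / 2) + 3 * ε)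
          / (1 - 3 * ε)) ^ ((1 : ℝ) / 3))
    (b : Fin m → ℝ)
    (hb : ∀ i, b i = lam * sInf {v : ℝ | ∃ j, A i j ≠ 0
        ∧ v = (1 - c * ∑ i', A i' j) / A i j} + lam * c)
    (s : ℝ)
    (hs : s = max (sSup {v : ℝ | ∃ j : Fin n, v = ∑ i, A i j * (ρ i / lam)}) 1)
    (Θ : Fin m → ℝ)
    (hΘ : ∀ i, Θ i = min (ρ i / lam / s)
        (min (b i / lam) ((y i - ε) / (lam * Real.sqrt ε)))) :
    (∀ j, ∑ i, A i j * Θ i ≤ 1)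
    ∧ ∀ i, lam * Θ i ≤ min (b i) ((y i - ε) / Real.sqrt ε) := by
  have hs1 : (1:ℝ) ≤ s := by rw [hs]; exact le_max_right _ _
  have hs0 : (0:ℝ) < s := lt_of_lt_of_le one_pos hs1
  constructor
  · intro j
    have h1 : ∑ i, A i j * Θ i ≤ ∑ i, A i j * (ρ i / lam / s) :=
      Finset.sum_le_sum fun i _ =>
        mul_le_mul_of_nonneg_left (by rw [hΘ]; exact min_le_left _ _) (hA i j)
    have h2 : ∑ i, A i j * (ρ i / lam / s) = (∑ i, A i j * (ρ i / lam)) / s := by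
      rw [Finset.sum_div]; exact Finset.sum_congr rfl fun i _ => by ring
    have hfin : ({v : ℝ | ∃ j : Fin n, v = ∑ i, A i j * (ρ i / lam)}).Finite := by
      have he : {v : ℝ | ∃ j : Fin n, v = ∑ i, A i j * (ρ i / lam)}
          = Set.range (fun j => ∑ i, A i j * (ρ i / lam)) := by
        ext v; simp [Set.range, eq_comm]
      rw [he]; exact Set.finite_range _
    have h3 : (∑ i, A i j * (ρ i / lam)) ≤ s := by
      rw [hs]
      exact le_trans (le_csSup hfin.bddAbove ⟨j, rfl⟩) (le_max_left _ _)
    calc ∑ i, A i j * Θ i ≤ (∑ i, A i j * (ρ i / lam)) / s := h2 ▸ h1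
      _ ≤ 1 := (div_le_one hs0).mpr h3
  · intro i
    apply le_min
    · have h1 : Θ i ≤ b i / lam := by
        rw [hΘ]; exact le_trans (min_le_right _ _) (min_le_left _ _)
      have := mul_le_mul_of_nonneg_left h1 hlam.le
      rwa [mul_div_cancel₀ _ hlam.ne'] at this
    · have h1 : Θ i ≤ (y i - ε) / (lam * Real.sqrt ε) := by
        rw [hΘ]; exact le_trans (min_le_right _ _) (min_le_right _ _)
      have h2 := mul_le_mul_of_nonneg_left h1 hlam.le
      calc lam * Θ i ≤ lam * ((y i - ε) / (lam * Real.sqrt ε)) := h2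
        _ = (y i - ε) / Real.sqrt ε := by
          field_simp
end

section
/- Let A be an m×n real matrix with nonnegative entries a_{ij} such that every row of A has at least one nonzero entry, let y ∈ ℝ^m with y_i ≥ 0 for all i and y_i > 0 for at least one i, let λ > 0 and ε > 0. Define D_λ(θ) = Σ_{i=1}^m ( y_i·log(1+λθ_i) − ελθ_i ), I₀ = {i : y_i = 0}, and the set S = {θ ∈ ℝ^m : Σ_i a_{ij}θ_i ≤ 1 for all j, θ_i = −1/λ for all i ∈ I₀, and 1 + λθ_i > 0 for all i ∉ I₀}. Let α = λ² · min_{i ∉ I₀} y_i / ( min_{j : a_{ij} ≠ 0} ((λ + Σ_{i'} a_{i'j}) / a_{ij}) )². Then D_λ is α-strongly concave on S. -/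
lemma log_strong_concave {M : ℝ} (hM : 0 < M) :
    ConcaveOn ℝ (Set.Ioc 0 M) (fun x => Real.log x + x ^ 2 / (2 * M ^ 2)) := by
  have hint : interior (Set.Ioc (0:ℝ) M) = Set.Ioo 0 M := interior_Ioc
  apply concaveOn_of_hasDerivWithinAt2_nonpos (f' := fun x => x⁻¹ + x / M ^ 2)
      (f'' := fun x => -(x ^ 2)⁻¹ + 1 / M ^ 2) (convex_Ioc 0 M)
  · apply ContinuousOn.add
    · exact Real.continuousOn_log.mono (fun x hx => by
        simp only [Set.mem_compl_iff, Set.mem_singleton_iff]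
        exact ne_of_gt hx.1)
    · fun_prop
  · intro x hx
    rw [hint] at hx
    have h1 : HasDerivAt (fun x : ℝ => Real.log x + x ^ 2 / (2 * M ^ 2))
        (x⁻¹ + x / M ^ 2) x := by
      have := (Real.hasDerivAt_log (ne_of_gt hx.1)).add
        ((hasDerivAt_pow 2 x).div_const (2 * M ^ 2))
      refine this.congr_deriv ?_
      rw [show (2:ℕ) - 1 = 1 from rfl, pow_one]
      ring
    exact h1.hasDerivWithinAt
  · intro x hx
    rw [hint] at hx
    have h1 : HasDerivAt (fun x : ℝ => x⁻¹ + x / M ^ 2) (-(x ^ 2)⁻¹ + 1 / M ^ 2) x :=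
      (hasDerivAt_inv (ne_of_gt hx.1)).add ((hasDerivAt_id x).div_const (M ^ 2))
    exact h1.hasDerivWithinAt
  · intro x hx
    rw [hint] at hx
    have hx2 : x ^ 2 ≤ M ^ 2 := by nlinarith [hx.1, hx.2]
    have : (M ^ 2)⁻¹ ≤ (x ^ 2)⁻¹ := by
      apply inv_anti₀ (pow_pos hx.1 2) hx2
    simp only [one_div]
    linarith

lemma scalar_key {M a b t : ℝ} (hM : 0 < M) (ha : a ∈ Set.Ioc 0 M) (hb : b ∈ Set.Ioc 0 M)
    (ht0 : 0 ≤ t) (ht1 : t ≤ 1) :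
    t * Real.log a + (1 - t) * Real.log b + t * (1 - t) * (a - b) ^ 2 / (2 * M ^ 2)
      ≤ Real.log (t * a + (1 - t) * b) := by
  have h := (log_strong_concave hM).2 ha hb (show (0:ℝ) ≤ t from ht0)
    (show (0:ℝ) ≤ 1 - t by linarith) (show t + (1 - t) = 1 by ring)
  simp only [smul_eq_mul] at h
  have hM2 : (0:ℝ) < 2 * M ^ 2 := by positivity
  have hq : (t * a + (1 - t) * b) ^ 2
      = t * a ^ 2 + (1 - t) * b ^ 2 - t * (1 - t) * (a - b) ^ 2 := by ring
  rw [hq] at h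
  have e : t * (Real.log a + a ^ 2 / (2 * M ^ 2)) + (1 - t) * (Real.log b + b ^ 2 / (2 * M ^ 2))
      = (t * Real.log a + (1 - t) * Real.log b) + (t * a ^ 2 + (1 - t) * b ^ 2) / (2 * M ^ 2) := by
    ring
  have e2 : Real.log (t * a + (1 - t) * b)
        + (t * a ^ 2 + (1 - t) * b ^ 2 - t * (1 - t) * (a - b) ^ 2) / (2 * M ^ 2)
      = Real.log (t * a + (1 - t) * b) + (t * a ^ 2 + (1 - t) * b ^ 2) / (2 * M ^ 2)
        - t * (1 - t) * (a - b) ^ 2 / (2 * M ^ 2) := by ring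
  rw [e, e2] at h
  linarith

/-- **Strong concavity of the Kullback–Leibler dual function on `Δ_A ∩ S₀`**
(Proposition 20 of the paper): with
`α = λ² min_{i : y_i ≠ 0} y_i / (min_{j : a_{ij} ≠ 0} (λ + ‖a_j‖₁)/a_{ij})²`,
the dual function `D_λ(θ) = ∑ i (y_i log(1 + λθ_i) - ελθ_i)` is `α`-strongly
concave on the feasible set intersected with `S₀ = {θ : θ_{I₀} = -1/λ}` (within
the domain of `D_λ`). -/
theorem stmt_14 {m n : ℕ} (A : Matrix (Fin m) (Fin n) ℝ)
    (hA : ∀ i j, 0 ≤ A i j) (hrow : ∀ i, ∃ j, A i j ≠ 0)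
    (y : Fin m → ℝ) (hy : ∀ i, 0 ≤ y i) (hy' : ∃ i, 0 < y i)
    (lam ε : ℝ) (hlam : 0 < lam) (hε : 0 < ε)
    (D : EuclideanSpace ℝ (Fin m) → ℝ)
    (hD : ∀ θ, D θ = ∑ i, (y i * Real.log (1 + lam * θ i) - ε * (lam * θ i)))
    (S : Set (EuclideanSpace ℝ (Fin m)))
    (hS : S = {θ | (∀ j, ∑ i, A i j * θ i ≤ 1)
        ∧ (∀ i, y i = 0 → θ i = -1 / lam)
        ∧ ∀ i, y i ≠ 0 → 0 < 1 + lam * θ i})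
    (α : ℝ)
    (hα : α = lam ^ 2 * sInf {v : ℝ | ∃ i, y i ≠ 0 ∧ v = y i /
        (sInf {w : ℝ | ∃ j, A i j ≠ 0 ∧ w = (lam + ∑ i', A i' j) / A i j}) ^ 2}) :
    ∀ θ₁ ∈ S, ∀ θ₂ ∈ S, ∀ t : ℝ, 0 ≤ t → t ≤ 1 →
      t * D θ₁ + (1 - t) * D θ₂ + α / 2 * t * (1 - t) * ‖θ₁ - θ₂‖ ^ 2
        ≤ D (t • θ₁ + (1 - t) • θ₂) := by
  intro θ₁ hθ₁ θ₂ hθ₂ t ht0 ht1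
  rw [hS] at hθ₁ hθ₂
  obtain ⟨h1c, h1z, h1p⟩ := hθ₁
  obtain ⟨h2c, h2z, h2p⟩ := hθ₂
  -- lower bound on coordinates
  have hge : ∀ (θ : EuclideanSpace ℝ (Fin m)),
      (∀ i, y i = 0 → θ i = -1 / lam) → (∀ i, y i ≠ 0 → 0 < 1 + lam * θ i) →
      ∀ i, -(1 / lam) ≤ θ i := by
    intro θ hz hp i
    by_cases hyi : y i = 0
    · rw [hz i hyi]; rw [neg_div]
    · have h := hp i hyi
      rw [neg_le, le_div_iff₀ hlam]
      nlinarith [h]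
  -- upper bound on 1 + lam * θ i
  have hub : ∀ (θ : EuclideanSpace ℝ (Fin m)),
      (∀ j, ∑ i, A i j * θ i ≤ 1) → (∀ i', -(1 / lam) ≤ θ i') →
      ∀ i j, A i j ≠ 0 → 1 + lam * θ i ≤ (lam + ∑ i', A i' j) / A i j := by
    intro θ hc hl i j hij
    have hij' : 0 < A i j := (hA i j).lt_of_ne (Ne.symm hij)
    rw [le_div_iff₀ hij']
    have h1 : ∑ i', A i' j * θ i' ≤ 1 := hc j
    have hsplit : A i j * θ i + ∑ i' ∈ Finset.univ.erase i, A i' j * θ i'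
        = ∑ i', A i' j * θ i' :=
      Finset.add_sum_erase Finset.univ (fun i' => A i' j * θ i') (Finset.mem_univ i)
    have h3 : ∑ i' ∈ Finset.univ.erase i, (-(1 / lam) * A i' j)
        ≤ ∑ i' ∈ Finset.univ.erase i, A i' j * θ i' := by
      apply Finset.sum_le_sum
      intro i' _
      have := mul_le_mul_of_nonneg_left (hl i') (hA i' j)
      nlinarith [this]
    have h4 : ∑ i' ∈ Finset.univ.erase i, (-(1 / lam) * A i' j)
        = -(1 / lam) * ∑ i' ∈ Finset.univ.erase i, A i' j := by
      rw [Finset.mul_sum]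
    have h5 : A i j * θ i ≤ 1 + (1 / lam) * ∑ i' ∈ Finset.univ.erase i, A i' j := by
      rw [h4] at h3; linarith
    have hsumu : ∑ i', A i' j = A i j + ∑ i' ∈ Finset.univ.erase i, A i' j := by
      rw [← Finset.add_sum_erase Finset.univ (fun i' => A i' j) (Finset.mem_univ i)]
    have hfield : lam * ((1 / lam) * ∑ i' ∈ Finset.univ.erase i, A i' j)
        = ∑ i' ∈ Finset.univ.erase i, A i' j := by
      field_simp
    have h6 := mul_le_mul_of_nonneg_left h5 hlam.le
    rw [mul_add, hfield] at h6
    rw [hsumu]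
    nlinarith [h6]
  have happ : ∀ i, (t • θ₁ + (1 - t) • θ₂ : EuclideanSpace ℝ (Fin m)) i
      = t * θ₁ i + (1 - t) * θ₂ i := by
    intro i
    simp [PiLp.add_apply, PiLp.smul_apply, smul_eq_mul]
  have hnorm : ‖θ₁ - θ₂‖ ^ 2 = ∑ i, (θ₁ i - θ₂ i) ^ 2 := by
    rw [EuclideanSpace.norm_eq, Real.sq_sqrt (by positivity)]
    exact Finset.sum_congr rfl fun i _ => by
      rw [PiLp.sub_apply, Real.norm_eq_abs, sq_abs]
  -- per-coordinate inequality
  have hper : ∀ i, t * (y i * Real.log (1 + lam * θ₁ i))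
      + (1 - t) * (y i * Real.log (1 + lam * θ₂ i))
      + α / 2 * t * (1 - t) * (θ₁ i - θ₂ i) ^ 2
      ≤ y i * Real.log (1 + lam * (t * θ₁ i + (1 - t) * θ₂ i)) := by
    intro i
    by_cases hyi : y i = 0
    · rw [hyi, h1z i hyi, h2z i hyi]
      simp
    · set Mi := sInf {w : ℝ | ∃ j, A i j ≠ 0 ∧ w = (lam + ∑ i', A i' j) / A i j} with hMi
      have hneW : {w : ℝ | ∃ j, A i j ≠ 0 ∧ w = (lam + ∑ i', A i' j) / A i j}.Nonempty := by
        obtain ⟨j, hj⟩ := hrow i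
        exact ⟨_, j, hj, rfl⟩
      have hx1le : 1 + lam * θ₁ i ≤ Mi :=
        le_csInf hneW (by rintro w ⟨j, hj, rfl⟩; exact hub θ₁ h1c (hge θ₁ h1z h1p) i j hj)
      have hx2le : 1 + lam * θ₂ i ≤ Mi :=
        le_csInf hneW (by rintro w ⟨j, hj, rfl⟩; exact hub θ₂ h2c (hge θ₂ h2z h2p) i j hj)
      have hx1pos := h1p i hyi
      have hx2pos := h2p i hyi
      have hMipos : 0 < Mi := lt_of_lt_of_le hx1pos hx1le
      have key := scalar_key hMipos ⟨hx1pos, hx1le⟩ ⟨hx2pos, hx2le⟩ ht0 ht1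
      have hmix : t * (1 + lam * θ₁ i) + (1 - t) * (1 + lam * θ₂ i)
          = 1 + lam * (t * θ₁ i + (1 - t) * θ₂ i) := by ring
      rw [hmix] at key
      have hmul := mul_le_mul_of_nonneg_left key (hy i)
      -- bound on α
      have hαle : α ≤ lam ^ 2 * (y i / Mi ^ 2) := by
        rw [hα]
        apply mul_le_mul_of_nonneg_left _ (by positivity)
        apply csInf_le
        · refine ⟨0, ?_⟩
          rintro v ⟨k, hk, rfl⟩
          exact div_nonneg (hy k) (sq_nonneg _)
        · exact ⟨i, hyi, rfl⟩
      have hnn : 0 ≤ t * (1 - t) * (θ₁ i - θ₂ i) ^ 2 :=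
        mul_nonneg (mul_nonneg ht0 (by linarith)) (sq_nonneg _)
      have hαd : α / 2 * t * (1 - t) * (θ₁ i - θ₂ i) ^ 2
          ≤ y i * (t * (1 - t) * ((1 + lam * θ₁ i) - (1 + lam * θ₂ i)) ^ 2 / (2 * Mi ^ 2)) := by
        have e1 : α / 2 * t * (1 - t) * (θ₁ i - θ₂ i) ^ 2
            = α * (t * (1 - t) * (θ₁ i - θ₂ i) ^ 2) / 2 := by ring
        have e2 : y i * (t * (1 - t) * ((1 + lam * θ₁ i) - (1 + lam * θ₂ i)) ^ 2 / (2 * Mi ^ 2))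
            = (lam ^ 2 * (y i / Mi ^ 2)) * (t * (1 - t) * (θ₁ i - θ₂ i) ^ 2) / 2 := by
          field_simp
          ring
        rw [e1, e2]
        exact div_le_div_of_nonneg_right (mul_le_mul_of_nonneg_right hαle hnn) (by norm_num)
      nlinarith [hmul, hαd]
  -- assemble
  rw [hD, hD, hD, hnorm]
  calc t * ∑ i, (y i * Real.log (1 + lam * θ₁ i) - ε * (lam * θ₁ i))
        + (1 - t) * ∑ i, (y i * Real.log (1 + lam * θ₂ i) - ε * (lam * θ₂ i))
        + α / 2 * t * (1 - t) * ∑ i, (θ₁ i - θ₂ i) ^ 2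
      = ∑ i, (t * (y i * Real.log (1 + lam * θ₁ i) - ε * (lam * θ₁ i))
          + (1 - t) * (y i * Real.log (1 + lam * θ₂ i) - ε * (lam * θ₂ i))
          + α / 2 * t * (1 - t) * (θ₁ i - θ₂ i) ^ 2) := by
        rw [Finset.sum_add_distrib, Finset.sum_add_distrib, ← Finset.mul_sum,
          ← Finset.mul_sum, ← Finset.mul_sum]
    _ ≤ ∑ i, (y i * Real.log (1 + lam * (t * θ₁ i + (1 - t) * θ₂ i))
          - ε * (lam * (t * θ₁ i + (1 - t) * θ₂ i))) := by
        apply Finset.sum_le_sum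
        intro i _
        have := hper i
        linarith
    _ = ∑ i, (y i * Real.log (1 + lam * (t • θ₁ + (1 - t) • θ₂ : EuclideanSpace ℝ (Fin m)) i)
          - ε * (lam * (t • θ₁ + (1 - t) • θ₂ : EuclideanSpace ℝ (Fin m)) i)) := by
        exact Finset.sum_congr rfl fun i _ => by rw [happ i]
end

section
/- Let y ∈ ℝ^m with y_i ≥ 0 for all i and y_i > 0 for at least one i, let λ > 0 and ε > 0. Define D_λ(θ) = Σ_{i=1}^m ( y_i·log(1+λθ_i) − ελθ_i ) and I₀ = {i : y_i = 0}. Let θ̄ ∈ ℝ^m with θ̄_i ≥ −1/λ for all i and θ̄_i = −1/λ for all i ∈ I₀, let r ≥ 0, and let α = λ² · min_{i ∉ I₀} y_i/(1 + λ(θ̄_i + r))². Then D_λ is α-strongly concave on the set B(θ̄, r) ∩ {θ ∈ ℝ^m : θ_i = −1/λ for all i ∈ I₀ and 1 + λθ_i > 0 for all i ∉ I₀}, where B(θ̄, r) = {θ : ‖θ − θ̄‖ ≤ r} is the closed Euclidean ball. -/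
open Set

/-- Concavity of `x ↦ log x + x²/(2M²)` on `(0, M]`. -/
lemma logquad_concaveOn (M : ℝ) (hM : 0 < M) :
    ConcaveOn ℝ (Set.Ioc (0:ℝ) M) (fun x => Real.log x + x ^ 2 / (2 * M ^ 2)) := by
  apply concaveOn_of_hasDerivWithinAt2_nonpos (f' := fun x => x⁻¹ + x / M ^ 2)
    (f'' := fun x => -(x ^ 2)⁻¹ + 1 / M ^ 2) (convex_Ioc 0 M)
  · apply ContinuousOn.add
    · exact Real.continuousOn_log.mono (fun x hx => ne_of_gt hx.1)
    · exact (continuous_pow 2).continuousOn.div_const _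
  · intro x hx
    rw [interior_Ioc] at hx
    have h2 : HasDerivAt (fun x : ℝ => x ^ 2 / (2 * M ^ 2)) (x / M ^ 2) x := by
      have := (hasDerivAt_pow 2 x).div_const (2 * M ^ 2)
      refine this.congr_deriv ?_
      field_simp
      ring
    exact ((Real.hasDerivAt_log hx.1.ne').add h2).hasDerivWithinAt
  · intro x hx
    rw [interior_Ioc] at hx
    have h2 : HasDerivAt (fun x : ℝ => x / M ^ 2) (1 / M ^ 2) x := by
      simpa using (hasDerivAt_id x).div_const (M ^ 2)
    exact ((hasDerivAt_inv hx.1.ne').add h2).hasDerivWithinAt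
  · intro x hx
    rw [interior_Ioc] at hx
    have hx2 : (0:ℝ) < x ^ 2 := pow_pos hx.1 2
    have hxM : x ^ 2 ≤ M ^ 2 := by nlinarith [hx.1, hx.2]
    have : (M ^ 2)⁻¹ ≤ (x ^ 2)⁻¹ := by
      exact inv_anti₀ hx2 hxM
    have hM2 : (1:ℝ) / M ^ 2 = (M ^ 2)⁻¹ := one_div _
    linarith

/-- Scalar strong-concavity inequality for `log` on `(0, M]`. -/
lemma log_strong_concave_s15 (M u v t : ℝ) (hM : 0 < M) (hu : u ∈ Set.Ioc (0:ℝ) M)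
    (hv : v ∈ Set.Ioc (0:ℝ) M) (ht : 0 ≤ t) (ht' : t ≤ 1) :
    t * Real.log u + (1 - t) * Real.log v + t * (1 - t) * (u - v) ^ 2 / (2 * M ^ 2)
      ≤ Real.log (t * u + (1 - t) * v) := by
  have h := (logquad_concaveOn M hM).2 hu hv ht (show (0:ℝ) ≤ 1 - t by linarith) (by ring)
  simp only [smul_eq_mul] at h
  have hMne : (M:ℝ) ≠ 0 := hM.ne'
  have key : t * (1 - t) * (u - v) ^ 2 / (2 * M ^ 2)
      = (t * u ^ 2 + (1 - t) * v ^ 2) / (2 * M ^ 2) - (t * u + (1 - t) * v) ^ 2 / (2 * M ^ 2) := by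
    field_simp
    ring
  have h2 : t * (Real.log u + u ^ 2 / (2 * M ^ 2)) + (1 - t) * (Real.log v + v ^ 2 / (2 * M ^ 2))
      = t * Real.log u + (1 - t) * Real.log v
        + (t * u ^ 2 + (1 - t) * v ^ 2) / (2 * M ^ 2) := by
    field_simp
    ring
  rw [h2] at h
  linarith

/-- **Ball-local strong concavity of the Kullback–Leibler dual function**
(Proposition 21 of the paper): with `α = λ² min_{i : y_i ≠ 0} y_i/(1 + λ(θ̄_i + r))²`,
the dual function `D_λ(θ) = ∑ i (y_i log(1 + λθ_i) - ελθ_i)` is `α`-strongly concave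
on `B(θ̄, r) ∩ S₀` (within the domain of `D_λ`), where `S₀` pins `θ_i = -1/λ` on the
coordinates with `y_i = 0`. -/
theorem stmt_15 {m : ℕ} (y : Fin m → ℝ) (hy : ∀ i, 0 ≤ y i) (hy' : ∃ i, 0 < y i)
    (lam ε : ℝ) (hlam : 0 < lam) (hε : 0 < ε)
    (D : EuclideanSpace ℝ (Fin m) → ℝ)
    (hD : ∀ θ, D θ = ∑ i, (y i * Real.log (1 + lam * θ i) - ε * (lam * θ i)))
    (θb : EuclideanSpace ℝ (Fin m))
    (hθb : ∀ i, -1 / lam ≤ θb i) (hθb0 : ∀ i, y i = 0 → θb i = -1 / lam)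
    (r : ℝ) (hr : 0 ≤ r)
    (α : ℝ)
    (hα : α = lam ^ 2 * sInf {v : ℝ | ∃ i, y i ≠ 0
        ∧ v = y i / (1 + lam * (θb i + r)) ^ 2}) :
    ∀ θ₁ ∈ Metric.closedBall θb r ∩
        {θ : EuclideanSpace ℝ (Fin m) | (∀ i, y i = 0 → θ i = -1 / lam)
          ∧ ∀ i, y i ≠ 0 → 0 < 1 + lam * θ i},
      ∀ θ₂ ∈ Metric.closedBall θb r ∩
        {θ : EuclideanSpace ℝ (Fin m) | (∀ i, y i = 0 → θ i = -1 / lam)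
          ∧ ∀ i, y i ≠ 0 → 0 < 1 + lam * θ i},
      ∀ t : ℝ, 0 ≤ t → t ≤ 1 →
        t * D θ₁ + (1 - t) * D θ₂ + α / 2 * t * (1 - t) * ‖θ₁ - θ₂‖ ^ 2
          ≤ D (t • θ₁ + (1 - t) • θ₂) := by
  intro θ₁ hθ₁ θ₂ hθ₂ t ht ht'
  obtain ⟨hb₁, hp₁, hq₁⟩ := hθ₁
  obtain ⟨hb₂, hp₂, hq₂⟩ := hθ₂
  -- coordinatewise bound from the ball
  have hcoord : ∀ (θ : EuclideanSpace ℝ (Fin m)), θ ∈ Metric.closedBall θb r →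
      ∀ i, θ i ≤ θb i + r := by
    intro θ hθ i
    have hd : ‖θ - θb‖ ≤ r := by
      rw [← dist_eq_norm]; exact Metric.mem_closedBall.mp hθ
    have h1 : (θ i - θb i) ^ 2 ≤ ‖θ - θb‖ ^ 2 := by
      rw [EuclideanSpace.norm_eq, Real.sq_sqrt (by positivity)]
      have : (θ i - θb i) ^ 2 = ‖(θ - θb) i‖ ^ 2 := by
        simp [PiLp.sub_apply, Real.norm_eq_abs, sq_abs]
      rw [this]
      exact Finset.single_le_sum (f := fun j => ‖(θ - θb) j‖ ^ 2) (fun j _ => by positivity) (Finset.mem_univ i)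
    nlinarith [norm_nonneg (θ - θb), hd, h1]
  have hnorm : ‖θ₁ - θ₂‖ ^ 2 = ∑ i, (θ₁ i - θ₂ i) ^ 2 := by
    rw [EuclideanSpace.norm_eq, Real.sq_sqrt (by positivity)]
    congr 1; ext i
    simp [PiLp.sub_apply, Real.norm_eq_abs, sq_abs]
  -- bddBelow for the sInf set
  have hbdd : BddBelow {v : ℝ | ∃ i, y i ≠ 0 ∧ v = y i / (1 + lam * (θb i + r)) ^ 2} := by
    refine ⟨0, fun v hv => ?_⟩
    obtain ⟨i, _, rfl⟩ := hv
    exact div_nonneg (hy i) (sq_nonneg _)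
  rw [hD, hD, hD, hnorm, Finset.mul_sum, Finset.mul_sum, Finset.mul_sum,
    ← Finset.sum_add_distrib, ← Finset.sum_add_distrib]
  apply Finset.sum_le_sum
  intro i _
  have hcombo : (t • θ₁ + (1 - t) • θ₂) i = t * θ₁ i + (1 - t) * θ₂ i := by
    simp [PiLp.add_apply, PiLp.smul_apply, smul_eq_mul]
  rw [hcombo]
  by_cases hyi : y i = 0
  · have e1 := hp₁ i hyi
    have e2 := hp₂ i hyi
    rw [hyi, e1, e2]
    have hx : t * (-1 / lam) + (1 - t) * (-1 / lam) = -1 / lam := by ring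
    rw [hx]
    ring_nf
    try exact le_rfl
  · have hyipos : 0 < y i := lt_of_le_of_ne (hy i) (Ne.symm hyi)
    set M : ℝ := 1 + lam * (θb i + r) with hMdef
    set u : ℝ := 1 + lam * θ₁ i with hudef
    set v : ℝ := 1 + lam * θ₂ i with hvdef
    have hu0 : 0 < u := hq₁ i hyi
    have hv0 : 0 < v := hq₂ i hyi
    have huM : u ≤ M := by
      have := hcoord θ₁ hb₁ i
      rw [hudef, hMdef]
      nlinarith
    have hvM : v ≤ M := by
      have := hcoord θ₂ hb₂ i
      rw [hvdef, hMdef]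
      nlinarith
    have hM0 : 0 < M := lt_of_lt_of_le hu0 huM
    have hαi : α ≤ lam ^ 2 * (y i / M ^ 2) := by
      rw [hα]
      exact mul_le_mul_of_nonneg_left (csInf_le hbdd ⟨i, hyi, rfl⟩) (by positivity)
    have hkey := log_strong_concave_s15 M u v t hM0 ⟨hu0, huM⟩ ⟨hv0, hvM⟩ ht ht'
    have hkey' := mul_le_mul_of_nonneg_left hkey (hy i)
    have hw : 1 + lam * (t * θ₁ i + (1 - t) * θ₂ i) = t * u + (1 - t) * v := by
      rw [hudef, hvdef]; ring
    rw [hw]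
    have hd2 : (0:ℝ) ≤ t * (1 - t) * (θ₁ i - θ₂ i) ^ 2 / 2 := by
      have h1t : 0 ≤ 1 - t := by linarith
      positivity
    have hq := mul_le_mul_of_nonneg_right hαi hd2
    have heq : lam ^ 2 * (y i / M ^ 2) * (t * (1 - t) * (θ₁ i - θ₂ i) ^ 2 / 2)
        = y i * (t * (1 - t) * (u - v) ^ 2 / (2 * M ^ 2)) := by
      rw [hudef, hvdef]
      field_simp
      ring
    rw [heq] at hq
    have hexp : y i * (t * Real.log u + (1 - t) * Real.log v
        + t * (1 - t) * (u - v) ^ 2 / (2 * M ^ 2))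
        = y i * (t * Real.log u) + y i * ((1 - t) * Real.log v)
          + y i * (t * (1 - t) * (u - v) ^ 2 / (2 * M ^ 2)) := by ring
    rw [hexp] at hkey'
    linarith [hkey', hq]
end

section
/- Let A be an m×n real matrix, B an n×m real matrix with A·B equal to the m×m identity matrix, y ∈ ℝ^m with each y_i ∈ {0,1}, and λ > 0. Define D_λ(θ) = Σ_{i=1}^m ( (y_i − λθ_i − 1)·log(1 − y_i + λθ_i) − (y_i − λθ_i)·log(y_i − λθ_i) ), the set Δ = {θ ∈ ℝ^m : |Σ_i a_{ij}θ_i| ≤ 1 for all j, and y_i − 1 < λθ_i < y_i for all i}, the constant K = max_{i∈{1,…,m}} Σ_{j=1}^n |B_{ji}| (the maximum absolute column sum of B), and α = 4λ² / (1 − 4(min(λK, 1/2) − 1/2)²). Then D_λ is α-strongly concave on Δ. Moreover α > 4λ² whenever λ < 1/(2K). -/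
open Real Set

noncomputable def Hent (v : ℝ) : ℝ := -(v * Real.log v) - (1 - v) * Real.log (1 - v)

lemma Hent_hasDerivAt {v : ℝ} (h0 : 0 < v) (h1 : v < 1) :
    HasDerivAt Hent (Real.log (1 - v) - Real.log v) v := by
  have hv : v ≠ 0 := h0.ne'
  have hv1 : (1 : ℝ) - v ≠ 0 := by linarith
  have d1 : HasDerivAt (fun x : ℝ => x * Real.log x) (Real.log v + 1) v :=
    Real.hasDerivAt_mul_log hv
  have d2 : HasDerivAt (fun x : ℝ => (1 - x) * Real.log (1 - x))
      ((Real.log (1 - v) + 1) * (-1)) v := by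
    have inner : HasDerivAt (fun x : ℝ => 1 - x) (-1) v := by
      simpa using (hasDerivAt_id' v).const_sub (1:ℝ)
    exact (Real.hasDerivAt_mul_log hv1).comp v inner
  have := (d1.neg).sub d2
  exact this.congr_deriv (by ring)

noncomputable def Gent (ρ : ℝ) (v : ℝ) : ℝ := Hent v + ρ / 2 * v ^ 2

lemma Gent_hasDerivAt (ρ : ℝ) {v : ℝ} (h0 : 0 < v) (h1 : v < 1) :
    HasDerivAt (Gent ρ) (Real.log (1 - v) - Real.log v + ρ * v) v := by
  have d1 := Hent_hasDerivAt h0 h1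
  have d2 : HasDerivAt (fun x : ℝ => ρ / 2 * x ^ 2) (ρ * v) v := by
    have := (hasDerivAt_pow 2 v).const_mul (ρ / 2)
    exact this.congr_deriv (by norm_num; ring)
  exact d1.add d2

lemma Gent'_hasDerivAt (ρ : ℝ) {v : ℝ} (h0 : 0 < v) (h1 : v < 1) :
    HasDerivAt (fun x => Real.log (1 - x) - Real.log x + ρ * x)
      (-(1 - v)⁻¹ - v⁻¹ + ρ) v := by
  have hv1 : (1 : ℝ) - v ≠ 0 := by linarith
  have d1 : HasDerivAt (fun x : ℝ => Real.log (1 - x)) (-(1 - v)⁻¹) v := by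
    have inner : HasDerivAt (fun x : ℝ => 1 - x) (-1) v := by
      simpa using (hasDerivAt_id' v).const_sub (1:ℝ)
    have := (Real.hasDerivAt_log hv1).comp v inner
    exact this.congr_deriv (by ring)
  have d2 : HasDerivAt Real.log v⁻¹ v := Real.hasDerivAt_log h0.ne'
  have d3 : HasDerivAt (fun x : ℝ => ρ * x) ρ v := by
    simpa using (hasDerivAt_id v).const_mul ρ
  exact (d1.sub d2).add d3

lemma Gent_concave (r ρ : ℝ)
    (hb : ∀ v ∈ Ioo (0:ℝ) 1 ∩ Iic r, ρ * (v * (1 - v)) ≤ 1) :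
    ConcaveOn ℝ (Ioo (0:ℝ) 1 ∩ Iic r) (Gent ρ) := by
  set S : Set ℝ := Ioo (0:ℝ) 1 ∩ Iic r with hS
  have hSsub : S ⊆ Ioo (0:ℝ) 1 := inter_subset_left
  have hopen : IsOpen (Ioo (0:ℝ) 1) := isOpen_Ioo
  have hderiv_eq : ∀ x ∈ Ioo (0:ℝ) 1,
      deriv (Gent ρ) x = Real.log (1 - x) - Real.log x + ρ * x := fun x hx =>
    (Gent_hasDerivAt ρ hx.1 hx.2).deriv
  have hev : ∀ x ∈ Ioo (0:ℝ) 1,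
      deriv (Gent ρ) =ᶠ[nhds x] fun y => Real.log (1 - y) - Real.log y + ρ * y := by
    intro x hx
    filter_upwards [hopen.mem_nhds hx] with y hy using hderiv_eq y hy
  apply concaveOn_of_deriv2_nonpos ((convex_Ioo _ _).inter (convex_Iic r))
  · intro x hx
    exact (Gent_hasDerivAt ρ (hSsub hx).1 (hSsub hx).2).continuousAt.continuousWithinAt
  · intro x hx
    have hx' := hSsub (interior_subset hx)
    exact (Gent_hasDerivAt ρ hx'.1 hx'.2).differentiableAt.differentiableWithinAt
  · intro x hx
    have hx' := hSsub (interior_subset hx)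
    have := (Gent'_hasDerivAt ρ hx'.1 hx'.2).differentiableAt
    exact ((Filter.EventuallyEq.differentiableAt_iff (hev x hx')).2 this).differentiableWithinAt
  · intro x hx
    have hxS := interior_subset hx
    have hx' := hSsub hxS
    have h0 := hx'.1
    have h1 := hx'.2
    have h1' : (0:ℝ) < 1 - x := by linarith
    have e1 : deriv^[2] (Gent ρ) x = deriv (deriv (Gent ρ)) x := by
      simp [Function.iterate_succ, Function.iterate_zero]
    rw [e1, (hev x hx').deriv_eq, (Gent'_hasDerivAt ρ h0 h1).deriv]
    have hbx := hb x hxS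
    have key : ρ ≤ 1 / (x * (1 - x)) := (le_div_iff₀ (by positivity)).2 (by linarith)
    have split : 1 / (x * (1 - x)) = x⁻¹ + (1 - x)⁻¹ := by
      field_simp
      ring
    linarith [key, split.symm ▸ key]

lemma Hent_strong (r ρ : ℝ)
    (hb : ∀ v ∈ Ioo (0:ℝ) 1 ∩ Iic r, ρ * (v * (1 - v)) ≤ 1) :
    ∀ a ∈ Ioo (0:ℝ) 1 ∩ Iic r, ∀ b ∈ Ioo (0:ℝ) 1 ∩ Iic r, ∀ t : ℝ, 0 ≤ t → t ≤ 1 →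
      t * Hent a + (1 - t) * Hent b + ρ / 2 * (t * (1 - t) * (a - b) ^ 2)
        ≤ Hent (t * a + (1 - t) * b) := by
  intro a ha b hb' t ht ht1
  have hc := (Gent_concave r ρ hb).2 ha hb' (show (0:ℝ) ≤ t from ht)
    (show (0:ℝ) ≤ 1 - t by linarith) (by ring)
  simp only [smul_eq_mul, Gent] at hc
  nlinarith [hc]

set_option maxHeartbeats 1600000 in
/-- **Strong concavity of the logistic dual function on the feasible set**
(Proposition 10 of the paper): with `K = ‖B‖₁` the maximum absolute column sum of a
right inverse `B` of `A`, and `α = 4λ²/(1 - 4(min(λK, 1/2) - 1/2)²)`, the (binary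
entropy) dual function `D_λ` is `α`-strongly concave on the dual feasible set, and
`α > 4λ²` whenever `λ < 1/(2K)`. -/
theorem stmt_16 {m n : ℕ} (hm : 0 < m) (A : Matrix (Fin m) (Fin n) ℝ)
    (B : Matrix (Fin n) (Fin m) ℝ) (hAB : A * B = 1)
    (y : Fin m → ℝ) (hy : ∀ i, y i = 0 ∨ y i = 1)
    (lam : ℝ) (hlam : 0 < lam)
    (D : EuclideanSpace ℝ (Fin m) → ℝ)
    (hD : ∀ θ, D θ = ∑ i, ((y i - lam * θ i - 1) * Real.log (1 - y i + lam * θ i)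
        - (y i - lam * θ i) * Real.log (y i - lam * θ i)))
    (Δ : Set (EuclideanSpace ℝ (Fin m)))
    (hΔ : Δ = {θ | (∀ j, |∑ i, A i j * θ i| ≤ 1)
        ∧ ∀ i, y i - 1 < lam * θ i ∧ lam * θ i < y i})
    (K : ℝ) (hK : K = sSup {v : ℝ | ∃ i : Fin m, v = ∑ j, |B j i|})
    (α : ℝ) (hα : α = 4 * lam ^ 2 / (1 - 4 * (min (lam * K) (1 / 2) - 1 / 2) ^ 2)) :
    (∀ θ₁ ∈ Δ, ∀ θ₂ ∈ Δ, ∀ t : ℝ, 0 ≤ t → t ≤ 1 →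
      t * D θ₁ + (1 - t) * D θ₂ + α / 2 * t * (1 - t) * ‖θ₁ - θ₂‖ ^ 2
        ≤ D (t • θ₁ + (1 - t) • θ₂))
    ∧ (lam < 1 / (2 * K) → 4 * lam ^ 2 < α) := by
  -- K is an upper bound for all column sums and K > 0
  have hset : {v : ℝ | ∃ i : Fin m, v = ∑ j, |B j i|}
      = Set.range (fun i : Fin m => ∑ j, |B j i|) := by
    ext v; simp [eq_comm, Set.range]
  have hKmem : ∀ i : Fin m, (∑ j, |B j i|) ≤ K := by
    intro i
    rw [hK, hset]
    exact le_csSup (Set.finite_range _).bddAbove ⟨i, rfl⟩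
  have i₀ : Fin m := ⟨0, hm⟩
  have hcol : (0:ℝ) < ∑ j, |B j i₀| := by
    rcases (Finset.sum_nonneg (fun j _ => abs_nonneg (B j i₀))).lt_or_eq with h | h
    · exact h
    · exfalso
      have hz : ∀ j, B j i₀ = 0 := by
        intro j
        exact abs_eq_zero.1 ((Finset.sum_eq_zero_iff_of_nonneg
          (fun j _ => abs_nonneg (B j i₀))).1 h.symm j (Finset.mem_univ j))
      have h1 : (A * B) i₀ i₀ = 1 := by rw [hAB]; simp
      rw [Matrix.mul_apply] at h1
      simp [hz] at h1
  have hKpos : 0 < K := lt_of_lt_of_le hcol (hKmem i₀)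
  have hlK : 0 < lam * K := mul_pos hlam hKpos
  -- the denominator is positive
  have hden : 0 < 1 - 4 * (min (lam * K) (1 / 2) - 1 / 2) ^ 2 := by
    rcases le_total (lam * K) (1 / 2) with hmin | hmin
    · rw [min_eq_left hmin]; nlinarith
    · rw [min_eq_right hmin]; norm_num
  have hαpos : 0 < α := by rw [hα]; positivity
  constructor
  · -- main part
    intro θ₁ hθ₁ θ₂ hθ₂ t ht ht1
    -- coordinate bound
    have hbound : ∀ θ : EuclideanSpace ℝ (Fin m), θ ∈ Δ → ∀ i, |θ i| ≤ K := by
      intro θ hθ i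
      rw [hΔ] at hθ
      obtain ⟨h1c, _⟩ := hθ
      have hrep : θ i = ∑ j, (∑ k, A k j * θ k) * B j i := by
        have e1 : ∑ j, (∑ k, A k j * θ k) * B j i
            = ∑ k, (∑ j, A k j * B j i) * θ k := by
          simp_rw [Finset.sum_mul]
          rw [Finset.sum_comm]
          exact Finset.sum_congr rfl fun k _ => Finset.sum_congr rfl fun j _ => by ring
        rw [e1]
        have e2 : ∀ k, (∑ j, A k j * B j i) = (1 : Matrix (Fin m) (Fin m) ℝ) k i :=
          fun k => by rw [← Matrix.mul_apply, hAB]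
        simp_rw [e2, Matrix.one_apply]
        simp
      rw [hrep]
      calc |∑ j, (∑ k, A k j * θ k) * B j i|
          ≤ ∑ j, |(∑ k, A k j * θ k) * B j i| := Finset.abs_sum_le_sum_abs _ _
        _ ≤ ∑ j, |B j i| := Finset.sum_le_sum fun j _ => by
            rw [abs_mul]
            exact mul_le_of_le_one_left (abs_nonneg _) (h1c j)
        _ ≤ K := hKmem i
    -- set up the entropy strong concavity
    have hρex : ∃ ρ : ℝ, ρ = α / lam ^ 2 := ⟨_, rfl⟩
    obtain ⟨ρ, hρ⟩ := hρex
    have hρlam : ρ * lam ^ 2 = α := by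
      rw [hρ]; field_simp
    have hb' : ∀ v ∈ Ioo (0:ℝ) 1 ∩ Iic (lam * K), ρ * (v * (1 - v)) ≤ 1 := by
      rintro v ⟨⟨h0, h1⟩, h2⟩
      have h2' : v ≤ lam * K := h2
      have hkey : 4 * (v * (1 - v)) ≤ 1 - 4 * (min (lam * K) (1 / 2) - 1 / 2) ^ 2 := by
        rcases le_total (lam * K) (1 / 2) with hmin | hmin
        · rw [min_eq_left hmin]
          nlinarith [mul_nonneg (sub_nonneg.2 h2') (show (0:ℝ) ≤ 1 - lam * K - v by linarith)]
        · rw [min_eq_right hmin]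
          nlinarith [sq_nonneg (2 * v - 1)]
      rw [hρ, div_mul_eq_mul_div, div_le_one (pow_pos hlam 2), hα,
        div_mul_eq_mul_div, div_le_iff₀ hden]
      nlinarith [mul_le_mul_of_nonneg_left hkey (pow_pos hlam 2).le]
    have hΔ₁ := hΔ ▸ hθ₁
    have hΔ₂ := hΔ ▸ hθ₂
    obtain ⟨-, hc₁⟩ := hΔ₁
    obtain ⟨-, hc₂⟩ := hΔ₂
    -- per-coordinate inequality
    have key : ∀ i : Fin m,
        t * ((y i - lam * θ₁ i - 1) * Real.log (1 - y i + lam * θ₁ i)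
              - (y i - lam * θ₁ i) * Real.log (y i - lam * θ₁ i))
        + (1 - t) * ((y i - lam * θ₂ i - 1) * Real.log (1 - y i + lam * θ₂ i)
              - (y i - lam * θ₂ i) * Real.log (y i - lam * θ₂ i))
        + α / 2 * (t * (1 - t) * (θ₁ i - θ₂ i) ^ 2)
        ≤ (y i - lam * (t * θ₁ i + (1 - t) * θ₂ i) - 1)
              * Real.log (1 - y i + lam * (t * θ₁ i + (1 - t) * θ₂ i))
          - (y i - lam * (t * θ₁ i + (1 - t) * θ₂ i))
              * Real.log (y i - lam * (t * θ₁ i + (1 - t) * θ₂ i)) := by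
      intro i
      have ha1 := hbound θ₁ hθ₁ i
      have ha2 := hbound θ₂ hθ₂ i
      have habs1 := abs_le.1 ha1
      have habs2 := abs_le.1 ha2
      obtain ⟨hl1, hr1⟩ := hc₁ i
      obtain ⟨hl2, hr2⟩ := hc₂ i
      rcases hy i with hyi | hyi
      · -- y i = 0, use v = -(lam * u)
        have hrep : ∀ u : ℝ, (y i - lam * u - 1) * Real.log (1 - y i + lam * u)
            - (y i - lam * u) * Real.log (y i - lam * u) = Hent (-(lam * u)) := by
          intro u
          rw [hyi, show (1:ℝ) - 0 + lam * u = 1 - -(lam * u) by ring,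
            show (0:ℝ) - lam * u = -(lam * u) by ring]
          simp only [Hent]
          ring
        have hm1 : -(lam * θ₁ i) ∈ Ioo (0:ℝ) 1 ∩ Iic (lam * K) := by
          constructor
          · constructor <;> [linarith [hr1, hyi ▸ hr1]; linarith [hyi ▸ hl1]]
          · simp only [mem_Iic]
            nlinarith [habs1.1]
        have hm2 : -(lam * θ₂ i) ∈ Ioo (0:ℝ) 1 ∩ Iic (lam * K) := by
          constructor
          · constructor <;> [linarith [hyi ▸ hr2]; linarith [hyi ▸ hl2]]
          · simp only [mem_Iic]
            nlinarith [habs2.1]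
        have hs := Hent_strong (lam * K) ρ hb' _ hm1 _ hm2 t ht ht1
        rw [hrep, hrep, hrep]
        have harg : t * -(lam * θ₁ i) + (1 - t) * -(lam * θ₂ i)
            = -(lam * (t * θ₁ i + (1 - t) * θ₂ i)) := by ring
        rw [harg] at hs
        have hsq : ρ / 2 * (t * (1 - t) * (-(lam * θ₁ i) - -(lam * θ₂ i)) ^ 2)
            = α / 2 * (t * (1 - t) * (θ₁ i - θ₂ i) ^ 2) := by
          rw [← hρlam]; ring
        rw [hsq] at hs
        exact hs
      · -- y i = 1, use v = lam * u
        have hrep : ∀ u : ℝ, (y i - lam * u - 1) * Real.log (1 - y i + lam * u)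
            - (y i - lam * u) * Real.log (y i - lam * u) = Hent (lam * u) := by
          intro u
          rw [hyi, show (1:ℝ) - 1 + lam * u = lam * u by ring,
            show (1:ℝ) - lam * u = 1 - lam * u by ring]
          simp only [Hent]
          ring
        have hm1 : lam * θ₁ i ∈ Ioo (0:ℝ) 1 ∩ Iic (lam * K) := by
          constructor
          · constructor <;> [linarith [hyi ▸ hl1]; linarith [hyi ▸ hr1]]
          · simp only [mem_Iic]
            nlinarith [habs1.2]
        have hm2 : lam * θ₂ i ∈ Ioo (0:ℝ) 1 ∩ Iic (lam * K) := by
          constructor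
          · constructor <;> [linarith [hyi ▸ hl2]; linarith [hyi ▸ hr2]]
          · simp only [mem_Iic]
            nlinarith [habs2.2]
        have hs := Hent_strong (lam * K) ρ hb' _ hm1 _ hm2 t ht ht1
        rw [hrep, hrep, hrep]
        have harg : t * (lam * θ₁ i) + (1 - t) * (lam * θ₂ i)
            = lam * (t * θ₁ i + (1 - t) * θ₂ i) := by ring
        rw [harg] at hs
        have hsq : ρ / 2 * (t * (1 - t) * (lam * θ₁ i - lam * θ₂ i) ^ 2)
            = α / 2 * (t * (1 - t) * (θ₁ i - θ₂ i) ^ 2) := by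
          rw [← hρlam]; ring
        rw [hsq] at hs
        exact hs
    -- assemble
    have hnorm : ‖θ₁ - θ₂‖ ^ 2 = ∑ i, (θ₁ i - θ₂ i) ^ 2 := by
      rw [EuclideanSpace.norm_eq,
        Real.sq_sqrt (Finset.sum_nonneg fun i _ => sq_nonneg _)]
      exact Finset.sum_congr rfl fun i _ => by
        simp [Real.norm_eq_abs, sq_abs]
    have hmid : ∀ i, (t • θ₁ + (1 - t) • θ₂) i = t * θ₁ i + (1 - t) * θ₂ i := by
      intro i
      simp [PiLp.add_apply, PiLp.smul_apply, smul_eq_mul]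
    rw [hD, hD, hD, hnorm]
    simp_rw [hmid]
    rw [Finset.mul_sum, Finset.mul_sum, show α / 2 * t * (1 - t) = α / 2 * (t * (1 - t)) by ring,
      Finset.mul_sum]
    rw [← Finset.sum_add_distrib, ← Finset.sum_add_distrib]
    refine Finset.sum_le_sum fun i _ => ?_
    linarith [key i]
  · -- second claim
    intro hlt
    have h2K : (0:ℝ) < 2 * K := by linarith
    have hmul := (lt_div_iff₀ h2K).1 hlt
    have hlk2 : lam * K < 1 / 2 := by nlinarith
    have hne : lam * K - 1 / 2 < 0 := by linarith
    have hsqpos : 0 < (lam * K - 1 / 2) ^ 2 := by nlinarith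
    have hden' : 0 < 1 - 4 * (lam * K - 1 / 2) ^ 2 := by nlinarith
    rw [hα, min_eq_left hlk2.le, lt_div_iff₀ hden']
    nlinarith [pow_pos hlam 2]
end

section
/- Let y ∈ ℝ^m, λ > 0, and define D_λ(θ) = Σ_{i=1}^m ( (y_i − λθ_i − 1)·log(1 − y_i + λθ_i) − (y_i − λθ_i)·log(y_i − λθ_i) ). Let θ̄ ∈ ℝ^m with y_i − 1 ≤ λθ̄_i ≤ y_i for all i, let r ≥ 0, and let α = 4λ² / (1 − 4·(max(0, min_{i∈{1,…,m}} |λθ̄_i − y_i + 1/2| − λr))²). Then D_λ is α-strongly concave on the set B(θ̄, r) ∩ {θ ∈ ℝ^m : y_i − 1 < λθ_i < y_i for all i}, where B(θ̄, r) = {θ : ‖θ − θ̄‖ ≤ r} is the closed Euclidean ball. -/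
open Real Set

private lemma hasDerivAt_g (lam yi α x : ℝ) (ha : 0 < 1 - yi + lam * x) (hb : 0 < yi - lam * x) :
    HasDerivAt (fun u => (yi - lam*u - 1) * Real.log (1 - yi + lam*u)
      - (yi - lam*u) * Real.log (yi - lam*u) + α/2 * u^2)
      (-lam * Real.log (1 - yi + lam * x) + lam * Real.log (yi - lam * x) + α * x) x := by
  have hlin : HasDerivAt (fun u : ℝ => lam * u) lam x := by
    simpa using (hasDerivAt_id x).const_mul lam
  have hA : HasDerivAt (fun u : ℝ => 1 - yi + lam * u) lam x := hlin.const_add _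
  have hB : HasDerivAt (fun u : ℝ => yi - lam * u) (-lam) x := by
    simpa using hlin.const_sub yi
  have hC : HasDerivAt (fun u : ℝ => yi - lam * u - 1) (-lam) x := hB.sub_const 1
  have hLA : HasDerivAt (fun u : ℝ => Real.log (1 - yi + lam * u))
      (lam / (1 - yi + lam*x)) x := hA.log ha.ne'
  have hLB : HasDerivAt (fun u : ℝ => Real.log (yi - lam * u))
      (-lam / (yi - lam*x)) x := hB.log hb.ne'
  have h1 := hC.mul hLA
  have h2 := hB.mul hLB
  have h3 := (hasDerivAt_pow 2 x).const_mul (α/2)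
  have h := (h1.sub h2).add h3
  refine HasDerivAt.congr_deriv h ?_
  have hA0 : (1 - yi + lam*x) ≠ 0 := ha.ne'
  have hB0 : (yi - lam*x) ≠ 0 := hb.ne'
  field_simp
  ring

private lemma hasDerivAt_g' (lam yi α x : ℝ) (ha : 0 < 1 - yi + lam * x) (hb : 0 < yi - lam * x) :
    HasDerivAt (fun u => -lam * Real.log (1 - yi + lam*u) + lam * Real.log (yi - lam*u) + α * u)
      (α - lam^2/(1 - yi + lam*x) - lam^2/(yi - lam*x)) x := by
  have hlin : HasDerivAt (fun u : ℝ => lam * u) lam x := by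
    simpa using (hasDerivAt_id x).const_mul lam
  have hA : HasDerivAt (fun u : ℝ => 1 - yi + lam * u) lam x := hlin.const_add _
  have hB : HasDerivAt (fun u : ℝ => yi - lam * u) (-lam) x := by
    simpa using hlin.const_sub yi
  have hLA : HasDerivAt (fun u : ℝ => Real.log (1 - yi + lam * u))
      (lam / (1 - yi + lam*x)) x := hA.log ha.ne'
  have hLB : HasDerivAt (fun u : ℝ => Real.log (yi - lam * u))
      (-lam / (yi - lam*x)) x := hB.log hb.ne'
  have hlin2 : HasDerivAt (fun u : ℝ => α * u) α x := by
    simpa using (hasDerivAt_id x).const_mul α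
  have h := ((hLA.const_mul (-lam)).add (hLB.const_mul lam)).add hlin2
  refine HasDerivAt.congr_deriv h ?_
  have hA0 : (1 - yi + lam*x) ≠ 0 := ha.ne'
  have hB0 : (yi - lam*x) ≠ 0 := hb.ne'
  field_simp
  ring

private lemma coord_concave (lam yi α : ℝ) (S : Set ℝ) (hconv : Convex ℝ S)
    (hS : ∀ x ∈ S, 0 < 1 - yi + lam * x ∧ 0 < yi - lam * x)
    (hcurv : ∀ x ∈ S, α ≤ lam^2 / ((1 - yi + lam*x) * (yi - lam*x))) :
    ConcaveOn ℝ S (fun u => (yi - lam*u - 1) * Real.log (1 - yi + lam*u)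
      - (yi - lam*u) * Real.log (yi - lam*u) + α/2 * u^2) := by
  apply concaveOn_of_hasDerivWithinAt2_nonpos hconv
    (f' := fun u => -lam * Real.log (1 - yi + lam*u) + lam * Real.log (yi - lam*u) + α * u)
    (f'' := fun u => α - lam^2/(1-yi+lam*u) - lam^2/(yi-lam*u))
  · intro x hx
    exact (hasDerivAt_g lam yi α x (hS x hx).1 (hS x hx).2).continuousAt.continuousWithinAt
  · intro x hx
    have h := hS x (interior_subset hx)
    exact (hasDerivAt_g lam yi α x h.1 h.2).hasDerivWithinAt
  · intro x hx
    have h := hS x (interior_subset hx)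
    exact (hasDerivAt_g' lam yi α x h.1 h.2).hasDerivWithinAt
  · intro x hx
    have h := hS x (interior_subset hx)
    have hc := hcurv x (interior_subset hx)
    have hA0 : (1 - yi + lam*x) ≠ 0 := h.1.ne'
    have hB0 : (yi - lam*x) ≠ 0 := h.2.ne'
    have heq : lam^2/((1 - yi + lam*x) * (yi - lam*x))
        = lam^2/(1 - yi + lam*x) + lam^2/(yi - lam*x) := by
      field_simp
      ring
    rw [heq] at hc
    linarith

private lemma coord_abs_le {m : ℕ} (x : EuclideanSpace ℝ (Fin m)) (i : Fin m) : |x i| ≤ ‖x‖ := by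
  rw [EuclideanSpace.norm_eq, show |x i| = Real.sqrt (|x i|^2) from (Real.sqrt_sq (abs_nonneg _)).symm]
  apply Real.sqrt_le_sqrt
  have := Finset.single_le_sum (f := fun j => ‖x j‖^2) (fun j _ => sq_nonneg _) (Finset.mem_univ i)
  simpa [Real.norm_eq_abs] using this

/-- **Ball-local strong concavity of the logistic dual function**
(Proposition 11 of the paper): with
`α = 4λ²/(1 - 4([min_i |λθ̄_i - y_i + 1/2| - λr]⁺)²)`, the (binary entropy) dual
function `D_λ` is `α`-strongly concave on `B(θ̄, r)` intersected with the interior of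
its domain `{θ : y - 1 < λθ < y}`. -/
theorem stmt_17 {m : ℕ} (hm : 0 < m) (y : Fin m → ℝ)
    (lam : ℝ) (hlam : 0 < lam)
    (D : EuclideanSpace ℝ (Fin m) → ℝ)
    (hD : ∀ θ, D θ = ∑ i, ((y i - lam * θ i - 1) * Real.log (1 - y i + lam * θ i)
        - (y i - lam * θ i) * Real.log (y i - lam * θ i)))
    (θb : EuclideanSpace ℝ (Fin m))
    (hθb : ∀ i, y i - 1 ≤ lam * θb i ∧ lam * θb i ≤ y i)
    (r : ℝ) (hr : 0 ≤ r)
    (α : ℝ)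
    (hα : α = 4 * lam ^ 2 / (1 - 4 *
        (max 0 (sInf {v : ℝ | ∃ i : Fin m, v = |lam * θb i - y i + 1 / 2|}
          - lam * r)) ^ 2)) :
    ∀ θ₁ ∈ Metric.closedBall θb r ∩
        {θ : EuclideanSpace ℝ (Fin m) | ∀ i, y i - 1 < lam * θ i ∧ lam * θ i < y i},
      ∀ θ₂ ∈ Metric.closedBall θb r ∩
        {θ : EuclideanSpace ℝ (Fin m) | ∀ i, y i - 1 < lam * θ i ∧ lam * θ i < y i},
      ∀ t : ℝ, 0 ≤ t → t ≤ 1 →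
        t * D θ₁ + (1 - t) * D θ₂ + α / 2 * t * (1 - t) * ‖θ₁ - θ₂‖ ^ 2
          ≤ D (t • θ₁ + (1 - t) • θ₂) := by
  intro θ₁ hθ₁ θ₂ hθ₂ t ht0 ht1
  obtain ⟨hball₁, hbox₁⟩ := hθ₁
  obtain ⟨hball₂, hbox₂⟩ := hθ₂
  set V : Set ℝ := {v : ℝ | ∃ i : Fin m, v = |lam * θb i - y i + 1 / 2|} with hV
  set c : ℝ := max 0 (sInf V - lam * r) with hc
  have hVbdd : BddBelow V := by
    have hVr : V = Set.range (fun i : Fin m => |lam * θb i - y i + 1/2|) := by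
      ext v; simp [hV, Set.range, eq_comm]
    rw [hVr]; exact (Set.finite_range _).bddBelow
  have hsinf_le : ∀ i, sInf V ≤ |lam * θb i - y i + 1/2| := fun i => csInf_le hVbdd ⟨i, rfl⟩
  have hc0 : 0 ≤ c := le_max_left _ _
  have coordb : ∀ (θ : EuclideanSpace ℝ (Fin m)), θ ∈ Metric.closedBall θb r →
      ∀ i, |θ i - θb i| ≤ r := by
    intro θ hθ i
    have h1 : ‖θ - θb‖ ≤ r := by rwa [Metric.mem_closedBall, dist_eq_norm] at hθ
    have h2 : |(θ - θb) i| ≤ ‖θ - θb‖ := coord_abs_le _ i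
    simpa using h2.trans h1
  have keyS : ∀ (i : Fin m) (x : ℝ), |x - θb i| ≤ r → c ≤ |lam * x - y i + 1/2| := by
    intro i x hx
    apply max_le (abs_nonneg _)
    have h1 := hsinf_le i
    have h3 : |lam * θb i - y i + 1/2 - (lam * x - y i + 1/2)| ≤ lam * r := by
      have he : lam * θb i - y i + 1/2 - (lam * x - y i + 1/2) = lam * (θb i - x) := by ring
      rw [he, abs_mul, abs_of_pos hlam]
      rw [abs_sub_comm] at hx
      exact mul_le_mul_of_nonneg_left hx hlam.le
    have h4 := abs_sub_abs_le_abs_sub (lam * θb i - y i + 1/2) (lam * x - y i + 1/2)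
    linarith
  have hchalf : c < 1/2 := by
    have h1 := keyS ⟨0, hm⟩ (θ₁ ⟨0, hm⟩) (coordb θ₁ hball₁ ⟨0, hm⟩)
    have h2 := hbox₁ ⟨0, hm⟩
    have h3 : |lam * θ₁ ⟨0, hm⟩ - y ⟨0, hm⟩ + 1/2| < 1/2 := by
      rw [abs_lt]; constructor <;> [linarith [h2.1]; linarith [h2.2]]
    linarith
  have hden : 0 < 1 - 4 * c^2 := by nlinarith
  have coordineq : ∀ i : Fin m,
      t * ((y i - lam * θ₁ i - 1) * Real.log (1 - y i + lam * θ₁ i)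
          - (y i - lam * θ₁ i) * Real.log (y i - lam * θ₁ i))
      + (1 - t) * ((y i - lam * θ₂ i - 1) * Real.log (1 - y i + lam * θ₂ i)
          - (y i - lam * θ₂ i) * Real.log (y i - lam * θ₂ i))
      + α / 2 * t * (1 - t) * (θ₁ i - θ₂ i)^2
      ≤ (y i - lam * (t * θ₁ i + (1 - t) * θ₂ i) - 1)
            * Real.log (1 - y i + lam * (t * θ₁ i + (1 - t) * θ₂ i))
        - (y i - lam * (t * θ₁ i + (1 - t) * θ₂ i))
            * Real.log (y i - lam * (t * θ₁ i + (1 - t) * θ₂ i)) := by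
    intro i
    set Si : Set ℝ := Metric.closedBall (θb i) r ∩ {u : ℝ | y i - 1 < lam * u ∧ lam * u < y i}
      with hSi
    have hsetEq : {u : ℝ | y i - 1 < lam * u ∧ lam * u < y i}
        = Ioo ((y i - 1)/lam) (y i / lam) := by
      ext u
      simp only [Set.mem_setOf_eq, Set.mem_Ioo, div_lt_iff₀ hlam, lt_div_iff₀ hlam]
      constructor <;> intro h <;> constructor <;> nlinarith [h.1, h.2]
    have hconv : Convex ℝ Si := (convex_closedBall _ _).inter (hsetEq ▸ convex_Ioo _ _)
    have hS : ∀ x ∈ Si, 0 < 1 - y i + lam * x ∧ 0 < y i - lam * x := by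
      intro x hx
      exact ⟨by linarith [hx.2.1], by linarith [hx.2.2]⟩
    have hcurv : ∀ x ∈ Si, α ≤ lam^2 / ((1 - y i + lam * x) * (y i - lam * x)) := by
      intro x hx
      have hm1 : |x - θb i| ≤ r := by
        have := hx.1
        rwa [Metric.mem_closedBall, Real.dist_eq] at this
      have hd := keyS i x hm1
      have hd2 : c^2 ≤ (lam * x - y i + 1/2)^2 := by
        nlinarith [sq_abs (lam * x - y i + 1/2), abs_nonneg (lam * x - y i + 1/2)]
      have hAB : 0 < (1 - y i + lam * x) * (y i - lam * x) :=
        mul_pos (hS x hx).1 (hS x hx).2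
      rw [hα, div_le_div_iff₀ hden hAB]
      nlinarith [mul_nonneg (sq_nonneg lam) (sub_nonneg.2 hd2)]
    have hcon := coord_concave lam (y i) α Si hconv hS hcurv
    have hmem1 : θ₁ i ∈ Si :=
      ⟨by rw [Metric.mem_closedBall, Real.dist_eq]; exact coordb θ₁ hball₁ i, hbox₁ i⟩
    have hmem2 : θ₂ i ∈ Si :=
      ⟨by rw [Metric.mem_closedBall, Real.dist_eq]; exact coordb θ₂ hball₂ i, hbox₂ i⟩
    have hcc := hcon.2 hmem1 hmem2 ht0 (show (0:ℝ) ≤ 1 - t by linarith) (show t + (1 - t) = 1 by ring)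
    simp only [smul_eq_mul] at hcc
    have hring : t * (α/2 * (θ₁ i)^2) + (1 - t) * (α/2 * (θ₂ i)^2)
        - α/2 * (t * θ₁ i + (1 - t) * θ₂ i)^2 = α / 2 * t * (1 - t) * (θ₁ i - θ₂ i)^2 := by
      ring
    linarith
  rw [hD, hD, hD]
  have happly : ∀ i, (t • θ₁ + (1 - t) • θ₂) i = t * θ₁ i + (1 - t) * θ₂ i := by
    intro i
    simp [PiLp.add_apply, PiLp.smul_apply, smul_eq_mul]
  have hnorm : ‖θ₁ - θ₂‖^2 = ∑ i, (θ₁ i - θ₂ i)^2 := by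
    rw [EuclideanSpace.norm_eq, Real.sq_sqrt (by positivity)]
    congr 1
    ext i
    simp [Real.norm_eq_abs, sq_abs]
  simp only [happly]
  rw [hnorm, Finset.mul_sum, Finset.mul_sum, Finset.mul_sum, ← Finset.sum_add_distrib,
    ← Finset.sum_add_distrib]
  exact Finset.sum_le_sum fun i _ => coordineq i
end
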